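/- arXiv:math/0508157 — 10 statements merged into one kernel-verified Lean document; each statement's English description precedes it below -/
import Mathlib

section
/- Let a, b, c be real numbers with a > -1 and c > 0, let p = (a-b)/(a+1), and assume p is not a positive integer. Let F₀ be a real number, set w(t) = c·t^(a+1)/(a+1), and define for t > 0: F(t) = F₀·exp(-w(t)) + c^(p-1)·(a+1)^(-p)·Γ(1-p)·∑_{m=1}^∞ (-1)^(m+1)·w(t)^(m-p)/Γ(m+1-p). Then F is differentiable on (0,∞) and satisfies the nonhomogeneous Abel equation F'(t) + c·t^a·F(t) = t^b for all t > 0. -/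
open Real Filter

private lemma gamma_summable (R q : ℝ) (hR : 0 ≤ R) :
    Summable (fun m : ℕ => R ^ m / |Real.Gamma ((m : ℝ) + q)|) := by
  apply summable_of_ratio_norm_eventually_le (r := 1/2) (by norm_num)
  obtain ⟨N, hN⟩ := exists_nat_ge (max (1 - q) (2 * R - q))
  filter_upwards [eventually_ge_atTop N] with m hm
  have hm' : (N : ℝ) ≤ (m : ℝ) := Nat.cast_le.mpr hm
  have h1 : (1 : ℝ) ≤ (m : ℝ) + q := by
    have := (le_max_left (1 - q) (2 * R - q)).trans (hN.trans hm'); linarith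
  have h2 : 2 * R ≤ (m : ℝ) + q := by
    have := (le_max_right (1 - q) (2 * R - q)).trans (hN.trans hm'); linarith
  have hpos : 0 < Real.Gamma ((m : ℝ) + q) := Real.Gamma_pos_of_pos (by linarith)
  have hrec : Real.Gamma (((m + 1 : ℕ) : ℝ) + q) = ((m : ℝ) + q) * Real.Gamma ((m : ℝ) + q) := by
    have h : ((m + 1 : ℕ) : ℝ) + q = ((m : ℝ) + q) + 1 := by push_cast; ring
    rw [h, Real.Gamma_add_one (by linarith)]
  rw [Real.norm_eq_abs, Real.norm_eq_abs, abs_of_pos hpos, hrec,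
    abs_of_pos (by positivity : (0:ℝ) < ((m : ℝ) + q) * Real.Gamma ((m : ℝ) + q)),
    abs_of_nonneg (by positivity : (0:ℝ) ≤ R ^ (m + 1) / (((m : ℝ) + q) * Real.Gamma ((m : ℝ) + q))),
    abs_of_nonneg (by positivity : (0:ℝ) ≤ R ^ m / Real.Gamma ((m : ℝ) + q))]
  have heq : R ^ (m + 1) / (((m : ℝ) + q) * Real.Gamma ((m : ℝ) + q)) =
      (R ^ m / Real.Gamma ((m : ℝ) + q)) * (R / ((m : ℝ) + q)) := by
    rw [pow_succ, div_mul_div_comm, mul_comm (Real.Gamma ((m : ℝ) + q)) ((m : ℝ) + q)]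
  rw [heq]
  have hb : R / ((m : ℝ) + q) ≤ 1 / 2 := by
    rw [div_le_div_iff₀ (by linarith) (by norm_num)]; linarith
  calc (R ^ m / Real.Gamma ((m : ℝ) + q)) * (R / ((m : ℝ) + q))
      ≤ (R ^ m / Real.Gamma ((m : ℝ) + q)) * (1 / 2) :=
        mul_le_mul_of_nonneg_left hb (by positivity)
    _ = 1 / 2 * (R ^ m / Real.Gamma ((m : ℝ) + q)) := by ring

/-- New exact solution of the nonhomogeneous Abel equation
`F'(t) + c·t^a·F(t) = t^b` in terms of a fractional-derivative series. -/
theorem abel_equation_exact_solution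
    (a b c : ℝ) (ha : -1 < a) (hc : 0 < c)
    (p : ℝ) (hp : p = (a - b) / (a + 1))
    (hpnat : ∀ n : ℕ, p ≠ (n : ℝ) + 1)
    (F₀ : ℝ)
    (w : ℝ → ℝ) (hw : ∀ t : ℝ, w t = c * t ^ (a + 1) / (a + 1))
    (F : ℝ → ℝ)
    (hF : ∀ t : ℝ, 0 < t →
      F t = F₀ * Real.exp (-(w t)) +
        c ^ (p - 1) * (a + 1) ^ (-p) * Real.Gamma (1 - p) *
          ∑' m : ℕ, (-1 : ℝ) ^ m * (w t) ^ ((m : ℝ) + 1 - p) /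
            Real.Gamma ((m : ℝ) + 2 - p)) :
    ∀ t : ℝ, 0 < t →
      DifferentiableAt ℝ F t ∧ deriv F t + c * t ^ a * F t = t ^ b := by
  have ha1 : (0:ℝ) < a + 1 := by linarith
  -- Gamma facts
  have hne : ∀ m : ℕ, (m : ℝ) + 1 - p ≠ 0 := by
    intro m h
    exact hpnat m (by linarith)
  have hΓne : ∀ m : ℕ, Real.Gamma ((m : ℝ) + 1 - p) ≠ 0 := by
    intro m
    apply Real.Gamma_ne_zero
    intro n h
    exact hpnat (m + n) (by push_cast; linarith)
  have hΓrec : ∀ m : ℕ, Real.Gamma ((m : ℝ) + 2 - p)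
      = ((m : ℝ) + 1 - p) * Real.Gamma ((m : ℝ) + 1 - p) := by
    intro m
    have h : (m : ℝ) + 2 - p = ((m : ℝ) + 1 - p) + 1 := by ring
    rw [h, Real.Gamma_add_one (hne m)]
  have hΓ2ne : ∀ m : ℕ, Real.Gamma ((m : ℝ) + 2 - p) ≠ 0 := fun m => by
    rw [hΓrec m]; exact mul_ne_zero (hne m) (hΓne m)
  have hΓ1ne : Real.Gamma (1 - p) ≠ 0 := by
    have := hΓne 0; simpa using this
  intro t ht
  -- the functions
  have hWpos : ∀ y : ℝ, 0 < y → 0 < w y := by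
    intro y hy; rw [hw]; positivity
  have hWd : ∀ y : ℝ, 0 < y → HasDerivAt w (c * y ^ a) y := by
    intro y hy
    have h := Real.hasDerivAt_rpow_const (x := y) (p := a + 1) (Or.inl (ne_of_gt hy))
    have h2 := (h.const_mul c).div_const (a + 1)
    have h3 : HasDerivAt (fun x => c * x ^ (a + 1) / (a + 1)) (c * y ^ a) y := by
      refine h2.congr_deriv ?_
      have he : a + 1 - 1 = a := by ring
      rw [he]
      field_simp
    exact h3.congr_of_eventuallyEq (Filter.Eventually.of_forall fun x => hw x)
  set f : ℕ → ℝ → ℝ := fun m y =>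
    (-1 : ℝ) ^ m * (w y) ^ ((m : ℝ) + 1 - p) / Real.Gamma ((m : ℝ) + 2 - p) with hfdef
  set f' : ℕ → ℝ → ℝ := fun m y =>
    (-1 : ℝ) ^ m * (((m : ℝ) + 1 - p) * (w y) ^ ((m : ℝ) - p) * (c * y ^ a)) /
      Real.Gamma ((m : ℝ) + 2 - p) with hf'def
  -- interval
  set s : Set ℝ := Set.Ioo (t / 2) (2 * t) with hsdef
  have hts : t ∈ s := by constructor <;> [linarith; linarith]
  have hspos : ∀ y ∈ s, 0 < y := fun y hy => lt_trans (by linarith) hy.1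
  set w1 : ℝ := w (t / 2) with hw1
  set w2 : ℝ := w (2 * t) with hw2
  have hw1pos : 0 < w1 := hWpos _ (by linarith)
  have hw2pos : 0 < w2 := hWpos _ (by linarith)
  have hWle : ∀ y ∈ s, w y ≤ w2 := by
    intro y hy
    have hy0 : (0:ℝ) ≤ y := (hspos y hy).le
    have hy2 : y ≤ 2 * t := hy.2.le
    rw [hw2, hw, hw]
    gcongr
  have hWge : ∀ y ∈ s, w1 ≤ w y := by
    intro y hy
    have hy0 : (0:ℝ) ≤ t / 2 := by linarith
    have hy1 : t / 2 ≤ y := hy.1.le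
    rw [hw1, hw, hw]
    gcongr
  -- bounds
  set A : ℝ := w1 ^ (-p) + w2 ^ (-p) with hA
  set Ca : ℝ := c * ((t / 2) ^ a + (2 * t) ^ a) with hCa
  have hApos : 0 < A := by positivity
  have hCapos : 0 < Ca := by positivity
  have hrpow_bound : ∀ y ∈ s, (w y) ^ (-p) ≤ A := by
    intro y hy
    have hWy := hWpos y (hspos y hy)
    rcases le_or_gt 0 (-p) with h | h
    · have h1 : (w y) ^ (-p) ≤ w2 ^ (-p) := Real.rpow_le_rpow hWy.le (hWle y hy) h
      have h2 : (0:ℝ) ≤ w1 ^ (-p) := by positivity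
      rw [hA]; linarith
    · have h1 : (w y) ^ (-p) ≤ w1 ^ (-p) :=
        Real.rpow_le_rpow_of_nonpos hw1pos (hWge y hy) h.le
      have h2 : (0:ℝ) ≤ w2 ^ (-p) := by positivity
      rw [hA]; linarith
  have hya_bound : ∀ y ∈ s, c * y ^ a ≤ Ca := by
    intro y hy
    have hy0 := hspos y hy
    have hya : y ^ a ≤ (t / 2) ^ a + (2 * t) ^ a := by
      rcases le_or_gt 0 a with h | h
      · have h1 : y ^ a ≤ (2 * t) ^ a := Real.rpow_le_rpow hy0.le hy.2.le h
        have h2 : (0:ℝ) ≤ (t / 2) ^ a := by positivity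
        linarith
      · have h1 : y ^ a ≤ (t / 2) ^ a :=
          Real.rpow_le_rpow_of_nonpos (by linarith) hy.1.le h.le
        have h2 : (0:ℝ) ≤ (2 * t) ^ a := by positivity
        linarith
    rw [hCa]
    exact mul_le_mul_of_nonneg_left hya hc.le
  set u : ℕ → ℝ := fun m => w2 ^ m * A * Ca / |Real.Gamma ((m : ℝ) + 1 - p)| with hu
  have hu_summable : Summable u := by
    have h := (gamma_summable w2 (1 - p) hw2pos.le).mul_right (A * Ca)
    apply h.congr
    intro m
    have he : (m : ℝ) + (1 - p) = (m : ℝ) + 1 - p := by ring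
    rw [hu]
    simp only [he]
    ring
  -- derivative of each term
  have hfd : ∀ m : ℕ, ∀ y ∈ s, HasDerivAt (f m) (f' m y) y := by
    intro m y hy
    have hy0 := hspos y hy
    have hWy := hWpos y hy0
    have hdW := hWd y hy0
    have h1 := hdW.rpow_const (p := (m : ℝ) + 1 - p) (Or.inl hWy.ne')
    have h2 := (h1.const_mul ((-1 : ℝ) ^ m)).div_const (Real.Gamma ((m : ℝ) + 2 - p))
    refine h2.congr_deriv ?_
    have he : (m : ℝ) + 1 - p - 1 = (m : ℝ) - p := by ring
    rw [hf'def]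
    simp only [he]
    ring
  -- splitting of rpow
  have hWsplit : ∀ (x : ℝ), 0 < x → ∀ m : ℕ, ∀ z : ℝ,
      x ^ ((m : ℝ) + z) = x ^ m * x ^ z := by
    intro x hx m z
    rw [Real.rpow_add hx, Real.rpow_natCast]
  -- bound on derivatives
  have hfb : ∀ m : ℕ, ∀ y ∈ s, ‖f' m y‖ ≤ u m := by
    intro m y hy
    have hy0 := hspos y hy
    have hWy := hWpos y hy0
    have habs : ‖f' m y‖ = (w y) ^ (m : ℕ) * (w y) ^ (-p) * (c * y ^ a) /
        |Real.Gamma ((m : ℝ) + 1 - p)| := by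
      simp only [hf'def]
      rw [Real.norm_eq_abs, abs_div, abs_mul, abs_mul, abs_mul, abs_pow, abs_neg, abs_one,
        one_pow, one_mul, abs_of_nonneg (Real.rpow_nonneg hWy.le _),
        abs_of_pos (by positivity : (0:ℝ) < c * y ^ a), hΓrec m, abs_mul]
      have he : (m : ℝ) - p = (m : ℝ) + (-p) := by ring
      rw [he, hWsplit (w y) hWy m (-p), mul_assoc (|(m : ℝ) + 1 - p|),
        mul_div_mul_left _ _ (abs_ne_zero.mpr (hne m))]
    rw [habs]
    simp only [hu]
    have hΓpos : 0 < |Real.Gamma ((m : ℝ) + 1 - p)| := abs_pos.mpr (hΓne m)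
    rw [div_le_div_iff_of_pos_right hΓpos]
    have h1 : (w y) ^ (m : ℕ) ≤ w2 ^ m := pow_le_pow_left₀ hWy.le (hWle y hy) m
    have h2 : (w y) ^ (m : ℕ) * (w y) ^ (-p) ≤ w2 ^ m * A :=
      mul_le_mul h1 (hrpow_bound y hy) (Real.rpow_nonneg hWy.le _) (by positivity)
    exact mul_le_mul h2 (hya_bound y hy) (by positivity) (by positivity)
  -- summability at the point t
  have hwt := hWpos t ht
  have hsum_aux : ∀ z : ℝ, Summable (fun m : ℕ =>
      (w t) ^ (m : ℕ) * (w t) ^ z / |Real.Gamma ((m : ℝ) + (1 - p))|) := by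
    intro z
    have h := (gamma_summable (w t) (1 - p) hwt.le).mul_right ((w t) ^ z)
    apply h.congr
    intro m
    ring
  have hsumf : Summable (fun m => f m t) := by
    rw [← summable_abs_iff]
    have h := (gamma_summable (w t) (2 - p) hwt.le).mul_right ((w t) ^ (1 - p))
    apply h.congr
    intro m
    simp only [hfdef]
    rw [abs_div, abs_mul, abs_pow, abs_neg, abs_one, one_pow, one_mul,
      abs_of_nonneg (Real.rpow_nonneg hwt.le _)]
    have he : (m : ℝ) + 1 - p = (m : ℝ) + (1 - p) := by ring
    rw [he, hWsplit (w t) hwt m (1 - p)]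
    have he2 : (m : ℝ) + 2 - p = (m : ℝ) + (2 - p) := by ring
    rw [he2]
    ring
  -- the derivative of the series
  have Hseries : HasDerivAt (fun y => ∑' m : ℕ, f m y) (∑' m : ℕ, f' m t) t :=
    hasDerivAt_tsum_of_isPreconnected hu_summable isOpen_Ioo
      (isPreconnected_Ioo) hfd hfb hts hsumf hts
  -- derivative of the exponential part
  have Hexp : HasDerivAt (fun y => F₀ * Real.exp (-(w y)))
      (F₀ * (Real.exp (-(w t)) * (-(c * t ^ a)))) t := by
    have h := ((hWd t ht).neg).exp
    exact h.const_mul F₀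
  set K : ℝ := c ^ (p - 1) * (a + 1) ^ (-p) * Real.Gamma (1 - p) with hK
  set Φ : ℝ → ℝ := fun y => F₀ * Real.exp (-(w y)) + K * ∑' m : ℕ, f m y with hΦ
  have HΦ : HasDerivAt Φ
      (F₀ * (Real.exp (-(w t)) * (-(c * t ^ a))) + K * ∑' m : ℕ, f' m t) t :=
    Hexp.add (Hseries.const_mul K)
  have hFeq : F =ᶠ[nhds t] Φ := by
    filter_upwards [Ioi_mem_nhds ht] with y hy
    rw [hF y hy, hΦ]
  have HF : HasDerivAt F
      (F₀ * (Real.exp (-(w t)) * (-(c * t ^ a))) + K * ∑' m : ℕ, f' m t) t :=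
    HΦ.congr_of_eventuallyEq hFeq
  refine ⟨HF.differentiableAt, ?_⟩
  rw [HF.deriv, hF t ht]
  -- rewrite the derivative series
  set G : ℝ := ∑' m : ℕ, f m t with hG
  have hsum_g : Summable (fun m : ℕ =>
      (-1 : ℝ) ^ m * (w t) ^ ((m : ℝ) - p) / Real.Gamma ((m : ℝ) + 1 - p)) := by
    rw [← summable_abs_iff]
    apply (hsum_aux (-p)).congr
    intro m
    rw [abs_div, abs_mul, abs_pow, abs_neg, abs_one, one_pow, one_mul,
      abs_of_nonneg (Real.rpow_nonneg hwt.le _)]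
    have he : (m : ℝ) - p = (m : ℝ) + (-p) := by ring
    rw [he, hWsplit (w t) hwt m (-p)]
    have he2 : (m : ℝ) + 1 - p = (m : ℝ) + (1 - p) := by ring
    rw [he2]
  have hS' : ∑' m : ℕ, f' m t
      = c * t ^ a * ((w t) ^ (-p) / Real.Gamma (1 - p) - G) := by
    have hstep1 : ∀ m : ℕ, f' m t
        = c * t ^ a * ((-1 : ℝ) ^ m * (w t) ^ ((m : ℝ) - p) / Real.Gamma ((m : ℝ) + 1 - p)) := by
      intro m
      simp only [hf'def]
      rw [hΓrec m]
      have h1 : (-1 : ℝ) ^ m * (((m : ℝ) + 1 - p) * (w t) ^ ((m : ℝ) - p) * (c * t ^ a))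
          = ((m : ℝ) + 1 - p) * ((-1 : ℝ) ^ m * (w t) ^ ((m : ℝ) - p) * (c * t ^ a)) := by
        ring
      rw [h1, mul_div_mul_left _ _ (hne m)]
      ring
    rw [tsum_congr hstep1, tsum_mul_left]
    congr 1
    rw [Summable.tsum_eq_zero_add hsum_g, sub_eq_add_neg]
    congr 1
    · norm_num
    rw [hG, ← tsum_neg]
    apply tsum_congr
    intro m
    simp only [hfdef]
    push_cast
    have he : ((m : ℝ) + 1) - p = (m : ℝ) + 1 - p := by ring
    have he2 : ((m : ℝ) + 1) + 1 - p = (m : ℝ) + 2 - p := by ring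
    rw [he, he2, pow_succ]
    ring
  rw [hS']
  -- final algebra
  have hkey : K * (c * t ^ a * ((w t) ^ (-p) / Real.Gamma (1 - p))) = t ^ b := by
    rw [hK, hw]
    have hnum : (0:ℝ) ≤ c * t ^ (a + 1) := by positivity
    rw [Real.div_rpow hnum ha1.le, Real.mul_rpow hc.le (Real.rpow_nonneg ht.le _),
      ← Real.rpow_mul ht.le]
    have hgoal : c ^ (p - 1) * (a + 1) ^ (-p) * Real.Gamma (1 - p) *
        (c * t ^ a * (c ^ (-p) * t ^ ((a + 1) * -p) / (a + 1) ^ (-p) / Real.Gamma (1 - p)))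
        = c ^ (p - 1) * c ^ (1:ℝ) * c ^ (-p) * (t ^ a * t ^ ((a + 1) * -p)) := by
      rw [Real.rpow_one]
      have hane : ((a:ℝ) + 1) ^ (-p) ≠ 0 := by positivity
      field_simp
    rw [hgoal, ← Real.rpow_add hc, ← Real.rpow_add hc, ← Real.rpow_add ht]
    have hc0 : p - 1 + 1 + -p = 0 := by ring
    rw [hc0, Real.rpow_zero, one_mul]
    congr 1
    have hpe : p * (a + 1) = a - b := by
      rw [hp]; field_simp
    linarith [hpe]
  calc F₀ * (Real.exp (-(w t)) * -(c * t ^ a)) +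
        K * (c * t ^ a * (w t ^ (-p) / Real.Gamma (1 - p) - G)) +
        c * t ^ a * (F₀ * Real.exp (-(w t)) + K * G)
      = K * (c * t ^ a * ((w t) ^ (-p) / Real.Gamma (1 - p))) := by ring
    _ = t ^ b := hkey
end

section
/- Let p be a real number that is not a positive integer, and define S(w) = ∑_{m=1}^∞ (-1)^(m+1)·w^(m-p)/Γ(m+1-p) for w > 0. Then S is differentiable on (0,∞) and satisfies S'(w) + S(w) = w^(-p)/Γ(1-p) for all w > 0. -/
open Real Filter

/-- The series `S(w) = ∑_{m≥1} (-1)^(m+1) w^(m-p)/Γ(m+1-p)` satisfies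
`S' + S = w^(-p)/Γ(1-p)` on `(0,∞)`. -/
theorem fractional_series_solves_first_order_ode
    (p : ℝ) (hp : ∀ n : ℕ, p ≠ (n : ℝ) + 1)
    (S : ℝ → ℝ)
    (hS : ∀ w : ℝ, 0 < w →
      S w = ∑' m : ℕ, (-1 : ℝ) ^ m * w ^ ((m : ℝ) + 1 - p) /
        Real.Gamma ((m : ℝ) + 2 - p)) :
    ∀ w : ℝ, 0 < w →
      DifferentiableAt ℝ S w ∧
      deriv S w + S w = w ^ (-p) / Real.Gamma (1 - p) := by
  -- Gamma values are nonzero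
  have hΓ : ∀ m : ℕ, Real.Gamma ((m : ℝ) + 1 - p) ≠ 0 := by
    intro m
    apply Real.Gamma_ne_zero
    intro k hk
    apply hp (m + k)
    push_cast
    linarith
  have hne : ∀ m : ℕ, (m : ℝ) + 1 - p ≠ 0 := by
    intro m h
    exact hp m (by linarith)
  -- Gamma recursion
  have hΓrec : ∀ m : ℕ, Real.Gamma ((m : ℝ) + 2 - p)
      = ((m : ℝ) + 1 - p) * Real.Gamma ((m : ℝ) + 1 - p) := by
    intro m
    have : (m : ℝ) + 2 - p = ((m : ℝ) + 1 - p) + 1 := by ring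
    rw [this, Real.Gamma_add_one (hne m)]
  set f : ℕ → ℝ → ℝ :=
    fun m x => (-1 : ℝ) ^ m * x ^ ((m : ℝ) + 1 - p) / Real.Gamma ((m : ℝ) + 2 - p) with hfdef
  set g : ℕ → ℝ → ℝ :=
    fun m x => (-1 : ℝ) ^ m * x ^ ((m : ℝ) - p) / Real.Gamma ((m : ℝ) + 1 - p) with hgdef
  have hfg : ∀ (m : ℕ) (x : ℝ), f m x = - g (m + 1) x := by
    intro m x
    simp only [hfdef, hgdef]
    push_cast
    have h1 : (m : ℝ) + 1 - p = ((m : ℝ) + 1) - p := by ring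
    have h2 : (m : ℝ) + 2 - p = ((m : ℝ) + 1) + 1 - p := by ring
    rw [h1, h2, pow_succ]
    ring
  intro w hw
  set t : Set ℝ := Set.Ioo (w / 2) (w * 2) with htdef
  have hwt : w ∈ t := ⟨by linarith, by linarith⟩
  set C : ℝ := (w / 2) ^ (-p) + (w * 2) ^ (-p) with hCdef
  have hC1 : (0 : ℝ) < (w / 2) ^ (-p) := Real.rpow_pos_of_pos (by linarith) _
  have hC2 : (0 : ℝ) < (w * 2) ^ (-p) := Real.rpow_pos_of_pos (by linarith) _
  set u : ℕ → ℝ := fun m => C * (w * 2) ^ m / |Real.Gamma ((m : ℝ) + 1 - p)| with hudef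
  have hCpos : 0 < C := by rw [hCdef]; positivity
  have hupos : ∀ m, 0 < u m := by
    intro m
    apply div_pos (mul_pos hCpos (pow_pos (by linarith) m))
    exact abs_pos.mpr (hΓ m)
  -- Summability of the bound via the ratio test
  have hu : Summable u := by
    apply summable_of_ratio_test_tendsto_lt_one (l := 0) one_pos
      (Eventually.of_forall fun m => (hupos m).ne')
    have heq : ∀ m : ℕ, ‖u (m + 1)‖ / ‖u m‖ = (w * 2) / |(m : ℝ) + 1 - p| := by
      intro m
      rw [Real.norm_eq_abs, Real.norm_eq_abs, abs_of_pos (hupos (m + 1)), abs_of_pos (hupos m)]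
      have hc : ((m + 1 : ℕ) : ℝ) + 1 - p = (m : ℝ) + 2 - p := by push_cast; ring
      simp only [hudef, hc, hΓrec m, pow_succ, abs_mul]
      have h1 : |Real.Gamma ((m : ℝ) + 1 - p)| ≠ 0 := abs_ne_zero.mpr (hΓ m)
      have h2 : |(m : ℝ) + 1 - p| ≠ 0 := abs_ne_zero.mpr (hne m)
      have h3 : C ≠ 0 := by positivity
      have h4 : (w * 2 : ℝ) ^ m ≠ 0 := (pow_pos (by linarith) m).ne'
      field_simp
    refine Tendsto.congr (fun m => (heq m).symm) ?_
    apply Tendsto.div_atTop tendsto_const_nhds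
    apply tendsto_abs_atTop_atTop.comp
    exact (tendsto_atTop_add_const_right atTop (1 - p)
      tendsto_natCast_atTop_atTop).congr (fun m => by ring)
  -- Derivatives of the individual terms
  have hderiv : ∀ (m : ℕ) (x : ℝ), x ∈ t → HasDerivAt (f m) (g m x) x := by
    intro m x hx
    have hx0 : (0 : ℝ) < x := lt_trans (by linarith) hx.1
    have h : HasDerivAt (fun y => (-1 : ℝ) ^ m / Real.Gamma ((m : ℝ) + 2 - p) * y ^ ((m : ℝ) + 1 - p))
        ((-1 : ℝ) ^ m / Real.Gamma ((m : ℝ) + 2 - p) * (((m : ℝ) + 1 - p) * x ^ ((m : ℝ) + 1 - p - 1))) x :=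
      (Real.hasDerivAt_rpow_const (x := x) (p := (m : ℝ) + 1 - p) (Or.inl hx0.ne')).const_mul
      ((-1 : ℝ) ^ m / Real.Gamma ((m : ℝ) + 2 - p))
    convert h using 1
    · funext y
      simp only [hfdef]
      ring
    · simp only [hgdef, hΓrec m]
      have h1 : (m : ℝ) + 1 - p - 1 = (m : ℝ) - p := by ring
      rw [h1, div_mul_eq_mul_div, ← mul_assoc, mul_comm ((-1 : ℝ) ^ m) ((m : ℝ) + 1 - p),
        mul_assoc, mul_div_mul_left _ _ (hne m)]
  -- Uniform bound on the derivatives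
  have hbound : ∀ (m : ℕ) (x : ℝ), x ∈ t → ‖g m x‖ ≤ u m := by
    intro m x hx
    have hx0 : (0 : ℝ) < x := lt_trans (by linarith) hx.1
    have hxval : ‖g m x‖ = x ^ ((m : ℝ) - p) / |Real.Gamma ((m : ℝ) + 1 - p)| := by
      simp only [hgdef, Real.norm_eq_abs, abs_div, abs_mul, abs_pow, abs_neg, abs_one, one_pow,
        one_mul, abs_of_pos (Real.rpow_pos_of_pos hx0 _)]
    rw [hxval, hudef]
    have hden : (0 : ℝ) < |Real.Gamma ((m : ℝ) + 1 - p)| := abs_pos.mpr (hΓ m)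
    refine div_le_div_of_nonneg_right ?_ hden.le
    have hsplit : x ^ ((m : ℝ) - p) = x ^ m * x ^ (-p) := by
      rw [show (m : ℝ) - p = (m : ℝ) + (-p) by ring, Real.rpow_add hx0, Real.rpow_natCast]
    rw [hsplit]
    have h1 : x ^ m ≤ (w * 2) ^ m := pow_le_pow_left₀ hx0.le hx.2.le m
    have h2 : x ^ (-p) ≤ C := by
      rcases le_or_gt 0 (-p) with h | h
      · calc x ^ (-p) ≤ (w * 2) ^ (-p) := Real.rpow_le_rpow hx0.le hx.2.le h
          _ ≤ C := by simp only [hCdef]; linarith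
      · calc x ^ (-p) ≤ (w / 2) ^ (-p) :=
            Real.rpow_le_rpow_of_nonpos (by linarith) hx.1.le h.le
          _ ≤ C := by simp only [hCdef]; linarith
    calc x ^ m * x ^ (-p) ≤ (w * 2) ^ m * C :=
          mul_le_mul h1 h2 (Real.rpow_pos_of_pos hx0 _).le (pow_pos (by linarith) m).le
      _ = C * (w * 2) ^ m := by ring
  -- Summability of g at w
  have hgsum : Summable fun m => g m w := by
    apply Summable.of_norm_bounded hu
    intro m
    exact hbound m w hwt
  -- Summability of f at w
  have hfsum : Summable fun m => f m w := by
    have : Summable fun m => g (m + 1) w := (summable_nat_add_iff 1).mpr hgsum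
    exact (this.neg).congr fun m => (hfg m w).symm
  -- The derivative of the sum
  have hder : HasDerivAt (fun z => ∑' m, f m z) (∑' m, g m w) w :=
    hasDerivAt_tsum_of_isPreconnected hu isOpen_Ioo isPreconnected_Ioo
      hderiv hbound hwt hfsum hwt
  -- S agrees with the sum near w
  have hSeq : S =ᶠ[nhds w] fun z => ∑' m, f m z := by
    filter_upwards [isOpen_Ioi.mem_nhds (Set.mem_Ioi.mpr hw)] with z hz
    exact hS z hz
  have hderS : HasDerivAt S (∑' m, g m w) w := hder.congr_of_eventuallyEq hSeq
  refine ⟨hderS.differentiableAt, ?_⟩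
  rw [hderS.deriv, hS w hw]
  have htel : ∑' m, f m w = g 0 w - ∑' m, g m w := by
    have h1 : ∑' m, f m w = -∑' m, g (m + 1) w := by
      rw [← tsum_neg]
      exact tsum_congr fun m => hfg m w
    rw [h1, hgsum.tsum_eq_zero_add]
    ring
  calc (∑' m, g m w) + ∑' m, f m w = g 0 w := by rw [htel]; ring
    _ = w ^ (-p) / Real.Gamma (1 - p) := by
      simp only [hgdef]
      norm_num
end

section
/- Let p be a real number with p < 1, and define S(w) = ∑_{m=1}^∞ (-1)^(m+1)·w^(m-p)/Γ(m+1-p) for w > 0. Then for every real s > 1, the Laplace transform integral ∫_0^∞ exp(-s·w)·S(w) dw converges and equals s^p/(s·(s+1)). -/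
open Real MeasureTheory

lemma integrableOn_rpow_mul_exp_neg_mul_aux {a r : ℝ} (ha : 0 < a) (hr : 0 < r) :
    IntegrableOn (fun t : ℝ => t ^ (a - 1) * Real.exp (-(r * t))) (Set.Ioi 0) := by
  have h := Real.GammaIntegral_convergent ha
  rw [← mul_zero r, ← integrableOn_Ioi_comp_mul_left_iff _ _ hr] at h
  refine IntegrableOn.congr_fun (h.const_mul (r ^ (a - 1))⁻¹) (fun t ht => ?_) measurableSet_Ioi
  have ht0 : (0 : ℝ) < t := ht
  have : (r * t) ^ (a - 1) = r ^ (a - 1) * t ^ (a - 1) := Real.mul_rpow hr.le ht0.le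
  have hrne : r ^ (a - 1) ≠ 0 := (Real.rpow_pos_of_pos hr _).ne'
  field_simp [this]
  exact Real.mul_rpow hr.le ht0.le

/-- Laplace transform of the fractional-derivative series solution:
`∫_0^∞ e^{-sw} S(w) dw = s^p / (s(s+1))` for `s > 1`. -/
theorem laplace_transform_fractional_series
    (p : ℝ) (hp : p < 1)
    (S : ℝ → ℝ)
    (hS : ∀ w : ℝ, 0 < w →
      S w = ∑' m : ℕ, (-1 : ℝ) ^ m * w ^ ((m : ℝ) + 1 - p) /
        Real.Gamma ((m : ℝ) + 2 - p)) :
    ∀ s : ℝ, 1 < s →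
      IntegrableOn (fun w : ℝ => Real.exp (-(s * w)) * S w) (Set.Ioi 0) ∧
      ∫ w in Set.Ioi (0 : ℝ), Real.exp (-(s * w)) * S w =
        s ^ p / (s * (s + 1)) := by
  intro s hs
  have hs0 : (0 : ℝ) < s := lt_trans one_pos hs
  set μ : Measure ℝ := volume.restrict (Set.Ioi 0) with hμ
  set g : ℕ → ℝ → ℝ := fun m w =>
    Real.exp (-(s * w)) * ((-1 : ℝ) ^ m * w ^ ((m : ℝ) + 1 - p) /
      Real.Gamma ((m : ℝ) + 2 - p)) with hg
  have ham : ∀ m : ℕ, (0 : ℝ) < (m : ℝ) + 2 - p := by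
    intro m
    have : (0 : ℝ) ≤ (m : ℝ) := Nat.cast_nonneg m
    linarith
  have hΓ : ∀ m : ℕ, (0 : ℝ) < Real.Gamma ((m : ℝ) + 2 - p) :=
    fun m => Real.Gamma_pos_of_pos (ham m)
  -- measurability
  have hmeas : ∀ m : ℕ, Measurable (g m) := by
    intro m
    have h1 : Continuous fun w : ℝ => Real.exp (-(s * w)) :=
      Real.continuous_exp.comp (continuous_const.mul continuous_id).neg
    have h2 : Continuous fun w : ℝ => w ^ ((m : ℝ) + 1 - p) := by
      apply Real.continuous_rpow_const
      have : (0 : ℝ) ≤ (m : ℝ) := Nat.cast_nonneg m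
      linarith
    exact (h1.mul ((continuous_const.mul h2).div_const _)).measurable
  -- per-term integrability
  have h_int : ∀ m : ℕ, Integrable (g m) μ := by
    intro m
    have h := integrableOn_rpow_mul_exp_neg_mul_aux (a := (m : ℝ) + 2 - p) (ham m) hs0
    have h' := h.const_mul ((-1 : ℝ) ^ m / Real.Gamma ((m : ℝ) + 2 - p))
    refine IntegrableOn.congr_fun h' (fun w hw => ?_) measurableSet_Ioi
    simp only [hg]
    have : (m : ℝ) + 2 - p - 1 = (m : ℝ) + 1 - p := by ring
    rw [this]
    ring
  -- per-term integral of norm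
  have h_int_norm : ∀ m : ℕ,
      ∫ w, ‖g m w‖ ∂μ = (1 / s) ^ ((m : ℝ) + 2 - p) := by
    intro m
    have heq : ∀ w ∈ Set.Ioi (0 : ℝ), ‖g m w‖ =
        (Real.Gamma ((m : ℝ) + 2 - p))⁻¹ *
          (w ^ ((m : ℝ) + 2 - p - 1) * Real.exp (-(s * w))) := by
      intro w hw
      have hw0 : (0 : ℝ) < w := hw
      have h1 : (0 : ℝ) < Real.exp (-(s * w)) := Real.exp_pos _
      have h2 : (0 : ℝ) < w ^ ((m : ℝ) + 1 - p) := Real.rpow_pos_of_pos hw0 _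
      have : ((m : ℝ) + 2 - p - 1) = (m : ℝ) + 1 - p := by ring
      rw [this]
      simp only [hg, Real.norm_eq_abs, abs_mul, abs_div, abs_pow, abs_neg, abs_one,
        one_pow, abs_of_pos h1, abs_of_pos h2, abs_of_pos (hΓ m)]
      field_simp
    rw [hμ, setIntegral_congr_fun measurableSet_Ioi heq, integral_const_mul,
      Real.integral_rpow_mul_exp_neg_mul_Ioi (ham m) hs0]
    rw [mul_comm, mul_assoc, mul_inv_cancel₀ (hΓ m).ne', mul_one]
  -- per-term integral
  have h_integral : ∀ m : ℕ,
      ∫ w, g m w ∂μ = (-1 : ℝ) ^ m * (1 / s) ^ ((m : ℝ) + 2 - p) := by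
    intro m
    have heq : ∀ w ∈ Set.Ioi (0 : ℝ), g m w =
        ((-1 : ℝ) ^ m * (Real.Gamma ((m : ℝ) + 2 - p))⁻¹) *
          (w ^ ((m : ℝ) + 2 - p - 1) * Real.exp (-(s * w))) := by
      intro w hw
      have : ((m : ℝ) + 2 - p - 1) = (m : ℝ) + 1 - p := by ring
      rw [this]
      simp only [hg]
      field_simp
    rw [hμ, setIntegral_congr_fun measurableSet_Ioi heq, integral_const_mul,
      Real.integral_rpow_mul_exp_neg_mul_Ioi (ham m) hs0]
    have : Real.Gamma ((m : ℝ) + 2 - p) ≠ 0 := (hΓ m).ne'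
    field_simp
  -- summability of the geometric-type bound
  have hinv : |(1 : ℝ) / s| < 1 := by
    rw [abs_of_pos (by positivity)]
    rw [div_lt_one hs0]; exact hs
  have hc_eq : ∀ m : ℕ,
      (1 / s) ^ ((m : ℝ) + 2 - p) = (1 / s) ^ m * (1 / s) ^ ((2 : ℝ) - p) := by
    intro m
    rw [show (m : ℝ) + 2 - p = (m : ℝ) + (2 - p) by ring,
      Real.rpow_add (by positivity), Real.rpow_natCast]
  have hsummable : Summable (fun m : ℕ => (1 / s) ^ ((m : ℝ) + 2 - p)) := by
    simp_rw [hc_eq]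
    exact (summable_geometric_of_abs_lt_one hinv).mul_right _
  have h_sum_norm : Summable (fun m : ℕ => ∫ w, ‖g m w‖ ∂μ) := by
    simp_rw [h_int_norm]; exact hsummable
  -- a.e. summability via lintegral finiteness
  have hf'' : ∀ m : ℕ, AEMeasurable (fun w => (‖g m w‖₊ : ENNReal)) μ :=
    fun m => (hmeas m).nnnorm.coe_nnreal_ennreal.aemeasurable
  have hf' : ∑' m : ℕ, ∫⁻ w, (‖g m w‖₊ : ENNReal) ∂μ ≠ ⊤ := by
    have heach : ∀ m : ℕ, ∫⁻ w, (‖g m w‖₊ : ENNReal) ∂μ =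
        ENNReal.ofReal ((1 / s) ^ ((m : ℝ) + 2 - p)) := by
      intro m
      have h := ofReal_integral_norm_eq_lintegral_enorm (h_int m)
      rw [h_int_norm m] at h
      exact h.symm
    simp_rw [heach]
    rw [← ENNReal.ofReal_tsum_of_nonneg (fun m => by positivity) hsummable]
    exact ENNReal.ofReal_ne_top
  have hhh : ∀ᵐ w ∂μ, Summable fun m : ℕ => ‖g m w‖ := by
    rw [← lintegral_tsum hf''] at hf'
    refine (ae_lt_top' (AEMeasurable.ennreal_tsum hf'') hf').mono ?_
    intro w hw
    have := ENNReal.tsum_coe_ne_top_iff_summable_coe.mp hw.ne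
    simpa [coe_nnnorm] using this
  -- integrability of the sum
  have hF_meas : AEStronglyMeasurable (fun w => ∑' m : ℕ, g m w) μ := by
    refine aestronglyMeasurable_of_tendsto_ae (f := fun n w => ∑ m ∈ Finset.range n, g m w)
      Filter.atTop (fun n => ((Finset.range n).measurable_sum
        (fun m _ => hmeas m)).aestronglyMeasurable) ?_
    filter_upwards [hhh] with w hw
    exact hw.of_norm.hasSum.tendsto_sum_nat
  have hF_int : Integrable (fun w => ∑' m : ℕ, g m w) μ := by
    refine ⟨hF_meas, ?_⟩
    rw [hasFiniteIntegral_def]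
    calc ∫⁻ w, (‖∑' m : ℕ, g m w‖₊ : ENNReal) ∂μ
        ≤ ∫⁻ w, ∑' m : ℕ, (‖g m w‖₊ : ENNReal) ∂μ := by
          refine lintegral_mono_ae ?_
          filter_upwards [hhh] with w hw
          have hsumm : Summable fun m : ℕ => ‖g m w‖₊ := by
            rw [← NNReal.summable_coe]; simpa [coe_nnnorm] using hw
          calc (‖∑' m : ℕ, g m w‖₊ : ENNReal)
              ≤ ((∑' m : ℕ, ‖g m w‖₊ : NNReal) : ENNReal) := by
                exact_mod_cast nnnorm_tsum_le hsumm
            _ = ∑' m : ℕ, (‖g m w‖₊ : ENNReal) := ENNReal.coe_tsum hsumm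
      _ = ∑' m : ℕ, ∫⁻ w, (‖g m w‖₊ : ENNReal) ∂μ := lintegral_tsum hf''
      _ < ⊤ := lt_top_iff_ne_top.mpr hf'
  -- the integrand agrees with the sum on Ioi 0
  have h_ae : (fun w : ℝ => Real.exp (-(s * w)) * S w) =ᵐ[μ]
      fun w => ∑' m : ℕ, g m w := by
    rw [hμ]
    filter_upwards [self_mem_ae_restrict (measurableSet_Ioi : MeasurableSet (Set.Ioi (0:ℝ)))]
      with w hw
    rw [hS w hw, ← tsum_mul_left]
  have hIntOn : IntegrableOn (fun w : ℝ => Real.exp (-(s * w)) * S w) (Set.Ioi 0) :=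
    hF_int.congr h_ae.symm
  refine ⟨hIntOn, ?_⟩
  -- compute the integral
  have hswap := integral_tsum_of_summable_integral_norm (μ := μ) h_int h_sum_norm
  have : ∫ w in Set.Ioi (0 : ℝ), Real.exp (-(s * w)) * S w
      = ∑' m : ℕ, ∫ w, g m w ∂μ := by
    rw [integral_congr_ae h_ae]
    exact hswap.symm
  rw [this]
  simp_rw [h_integral, hc_eq]
  have hterm : ∀ m : ℕ, (-1 : ℝ) ^ m * ((1 / s) ^ m * (1 / s) ^ ((2 : ℝ) - p))
      = (-(1 / s)) ^ m * (1 / s) ^ ((2 : ℝ) - p) := by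
    intro m; rw [neg_pow]; ring
  simp_rw [hterm]
  rw [tsum_mul_right, tsum_geometric_of_abs_lt_one (by rwa [abs_neg])]
  have h1 : (1 - -(1 / s))⁻¹ = s / (s + 1) := by
    rw [sub_neg_eq_add]
    field_simp
  have h2 : (1 / s : ℝ) ^ ((2 : ℝ) - p) = s ^ p / s ^ 2 := by
    rw [one_div, ← Real.rpow_natCast s 2, Real.inv_rpow hs0.le, Real.rpow_sub hs0,
      inv_div]
    norm_num
  rw [h1, h2]
  have hps : (0 : ℝ) < s ^ p := Real.rpow_pos_of_pos hs0 _
  have hs1 : s + 1 ≠ 0 := by positivity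
  field_simp
end

section
/- Let a, b, c be real numbers with b ≠ 0 and c ≠ 0, let p = (1-a)/(2c), and assume p is not a positive integer. Let F₀ be a real number, set w(t) = (b·t^c/(2c))², and define for t > 0: F(t) = F₀·Γ(1-p)·∑_{m=0}^∞ (-1)^m·w(t)^m/(m!·Γ(m+1-p)). Then F is twice differentiable on (0,∞) and satisfies the generalized Bessel equation F''(t) + (a/t)·F'(t) + b²·t^(2c-2)·F(t) = 0 for all t > 0. -/
open Real
open Filter

/-- Master summability: if coefficients satisfy the Bessel-type ratio identity, then
the polynomially-weighted series converges for every radius. -/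
lemma bessel_master_summable (q : ℕ → ℝ) (p r : ℝ)
    (hr : 0 ≤ r)
    (habs : ∀ m : ℕ, |q (m + 1)| * (((m : ℝ) + 1) * |(m : ℝ) + 1 - p|) = r * |q m|)
    (R : ℝ) (hR : 0 ≤ R) :
    Summable (fun m : ℕ => ((m : ℝ) + 1) ^ 2 * |q m| * R ^ m) := by
  apply summable_of_ratio_norm_eventually_le (r := 1/2) (by norm_num)
  obtain ⟨N, hN⟩ := exists_nat_ge (max p (8 * (r * R + 1)))
  filter_upwards [eventually_ge_atTop N] with m hm
  have hmp : p ≤ (m : ℝ) := le_trans (le_trans (le_max_left _ _) hN) (by exact_mod_cast hm)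
  have hmR : 8 * (r * R + 1) ≤ (m : ℝ) :=
    le_trans (le_trans (le_max_right _ _) hN) (by exact_mod_cast hm)
  have h1p : (1 : ℝ) ≤ (m : ℝ) + 1 - p := by linarith
  have habs' : |(m : ℝ) + 1 - p| = (m : ℝ) + 1 - p := abs_of_nonneg (by linarith)
  have hq := habs m
  rw [habs'] at hq
  have hQ1 : (0:ℝ) ≤ |q (m+1)| := abs_nonneg _
  have hQ0 : (0:ℝ) ≤ |q m| := abs_nonneg _
  have hA : |q (m + 1)| * ((m : ℝ) + 1) ≤ r * |q m| := by
    nlinarith [mul_nonneg hQ1 (by positivity : (0:ℝ) ≤ (m:ℝ)+1)]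
  have hM : (0:ℝ) ≤ (m:ℝ) := Nat.cast_nonneg m
  have c1 : ((m:ℝ)+1+1)^2 * |q (m+1)| * R ≤ 4*((m:ℝ)+1)^2 * |q (m+1)| * R := by
    nlinarith [mul_nonneg hQ1 hR, mul_nonneg (mul_nonneg hM hQ1) hR,
      mul_nonneg (mul_nonneg (mul_nonneg hM hM) hQ1) hR]
  have c2 : 4*((m:ℝ)+1)^2 * |q (m+1)| * R ≤ 4*((m:ℝ)+1)*R*(r * |q m|) := by
    nlinarith [mul_le_mul_of_nonneg_left hA (by positivity : (0:ℝ) ≤ 4*((m:ℝ)+1)*R)]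
  have c3 : 4*((m:ℝ)+1)*R*(r * |q m|) ≤ 1/2 * (((m:ℝ)+1)^2 * |q m|) := by
    nlinarith [mul_nonneg (sub_nonneg.mpr hmR) (mul_nonneg (by positivity : (0:ℝ) ≤ (m:ℝ)+1) hQ0),
      mul_nonneg hM hQ0]
  have step : ((m : ℝ) + 1 + 1) ^ 2 * |q (m+1)| * R ≤ 1/2 * (((m : ℝ) + 1) ^ 2 * |q m|) :=
    le_trans (le_trans c1 c2) c3
  have hpow : (0:ℝ) ≤ R ^ m := pow_nonneg hR m
  have : (((m:ℕ)+1 : ℕ) : ℝ) = (m : ℝ) + 1 := by push_cast; ring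
  calc ‖(((m+1 : ℕ) : ℝ) + 1) ^ 2 * |q (m+1)| * R ^ (m+1)‖
      = (((m : ℝ) + 1 + 1) ^ 2 * |q (m+1)| * R) * R ^ m := by
        rw [Real.norm_eq_abs, abs_of_nonneg (mul_nonneg (mul_nonneg (by positivity)
          (abs_nonneg _)) (pow_nonneg hR _)), pow_succ]
        push_cast; ring
    _ ≤ (1/2 * (((m : ℝ) + 1) ^ 2 * |q m|)) * R ^ m :=
        mul_le_mul_of_nonneg_right step hpow
    _ = 1/2 * ‖((m : ℝ) + 1) ^ 2 * |q m| * R ^ m‖ := by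
        rw [Real.norm_eq_abs, abs_of_nonneg (mul_nonneg (mul_nonneg (by positivity)
          (abs_nonneg _)) hpow)]; ring

/-- Generic bound for the series terms. -/
lemma bessel_term_bound (q : ℕ → ℝ) {x R : ℝ} (hR : 1 ≤ R) (hx : |x| ≤ R)
    {m j : ℕ} (hj : j ≤ m) {co : ℝ} (hc : |co| ≤ ((m : ℝ) + 1) ^ 2 * |q m|) :
    ‖co * x ^ j‖ ≤ ((m : ℝ) + 1) ^ 2 * |q m| * R ^ m := by
  rw [Real.norm_eq_abs, abs_mul, abs_pow]
  have h1 : |x| ^ j ≤ R ^ j := pow_le_pow_left₀ (abs_nonneg x) hx j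
  have h2 : R ^ j ≤ R ^ m := pow_le_pow_right₀ hR hj
  exact mul_le_mul hc (le_trans h1 h2) (by positivity) (by positivity)

lemma bessel_coeff_bound0 (q : ℕ → ℝ) (m : ℕ) :
    |q m| ≤ ((m : ℝ) + 1) ^ 2 * |q m| := by
  nlinarith [abs_nonneg (q m), Nat.cast_nonneg (α := ℝ) m,
    mul_nonneg (Nat.cast_nonneg (α := ℝ) m) (abs_nonneg (q m)),
    mul_nonneg (mul_nonneg (Nat.cast_nonneg (α := ℝ) m) (Nat.cast_nonneg (α := ℝ) m)) (abs_nonneg (q m))]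

lemma bessel_coeff_bound1 (q : ℕ → ℝ) (m : ℕ) :
    |(m : ℝ) * q m| ≤ ((m : ℝ) + 1) ^ 2 * |q m| := by
  rw [abs_mul, Nat.abs_cast]
  nlinarith [abs_nonneg (q m), Nat.cast_nonneg (α := ℝ) m,
    mul_nonneg (Nat.cast_nonneg (α := ℝ) m) (abs_nonneg (q m)),
    mul_nonneg (mul_nonneg (Nat.cast_nonneg (α := ℝ) m) (Nat.cast_nonneg (α := ℝ) m)) (abs_nonneg (q m))]

lemma bessel_coeff_bound2 (q : ℕ → ℝ) (m : ℕ) :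
    |((m - 1 : ℕ) : ℝ) * ((m : ℝ) * q m)| ≤ ((m : ℝ) + 1) ^ 2 * |q m| := by
  rw [abs_mul, abs_mul, Nat.abs_cast, Nat.abs_cast]
  have h1 : ((m - 1 : ℕ) : ℝ) ≤ (m : ℝ) + 1 := by
    have := Nat.sub_le m 1; exact_mod_cast le_trans (Nat.cast_le.mpr this) (by linarith)
  have h2 : (m : ℝ) ≤ (m : ℝ) + 1 := by linarith
  calc ((m - 1 : ℕ) : ℝ) * ((m : ℝ) * |q m|)
      ≤ ((m : ℝ) + 1) * (((m : ℝ) + 1) * |q m|) := by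
        apply mul_le_mul h1 (mul_le_mul_of_nonneg_right h2 (abs_nonneg _)) (by positivity) (by positivity)
    _ = ((m : ℝ) + 1) ^ 2 * |q m| := by ring

/-- Summability of the three derivative levels. -/
lemma bessel_summable0 (q : ℕ → ℝ)
    (hsum : ∀ R : ℝ, 1 ≤ R → Summable (fun m : ℕ => ((m : ℝ) + 1) ^ 2 * |q m| * R ^ m))
    (x : ℝ) : Summable (fun m : ℕ => q m * x ^ m) := by
  refine Summable.of_norm_bounded (hsum (max (|x|) 1) (le_max_right _ _)) fun m => ?_
  exact bessel_term_bound q (le_max_right _ _) (le_max_left _ _) le_rfl (bessel_coeff_bound0 q m)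

lemma bessel_summable1 (q : ℕ → ℝ)
    (hsum : ∀ R : ℝ, 1 ≤ R → Summable (fun m : ℕ => ((m : ℝ) + 1) ^ 2 * |q m| * R ^ m))
    (x : ℝ) : Summable (fun m : ℕ => ((m : ℝ) * q m) * x ^ (m - 1)) := by
  refine Summable.of_norm_bounded (hsum (max (|x|) 1) (le_max_right _ _)) fun m => ?_
  exact bessel_term_bound q (le_max_right _ _) (le_max_left _ _) (Nat.sub_le m 1)
    (bessel_coeff_bound1 q m)

lemma bessel_summable2 (q : ℕ → ℝ)
    (hsum : ∀ R : ℝ, 1 ≤ R → Summable (fun m : ℕ => ((m : ℝ) + 1) ^ 2 * |q m| * R ^ m))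
    (x : ℝ) : Summable (fun m : ℕ => (((m - 1 : ℕ) : ℝ) * ((m : ℝ) * q m)) * x ^ (m - 1 - 1)) := by
  refine Summable.of_norm_bounded (hsum (max (|x|) 1) (le_max_right _ _)) fun m => ?_
  exact bessel_term_bound q (le_max_right _ _) (le_max_left _ _)
    (le_trans (Nat.sub_le _ 1) (Nat.sub_le m 1)) (bessel_coeff_bound2 q m)

/-- First derivative of the power series. -/
lemma bessel_hasDerivAt1 (q : ℕ → ℝ)
    (hsum : ∀ R : ℝ, 1 ≤ R → Summable (fun m : ℕ => ((m : ℝ) + 1) ^ 2 * |q m| * R ^ m))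
    (u : ℝ) :
    HasDerivAt (fun x => ∑' m : ℕ, q m * x ^ m)
      (∑' m : ℕ, ((m : ℝ) * q m) * u ^ (m - 1)) u := by
  set R : ℝ := max (|u| + 1) 1 with hRdef
  have hR1 : 1 ≤ R := le_max_right _ _
  have hR0 : 0 < R := lt_of_lt_of_le one_pos hR1
  have huR : |u| < R := lt_of_lt_of_le (by linarith [abs_nonneg u]) (le_max_left _ _)
  apply hasDerivAt_tsum_of_isPreconnected (hsum R hR1) Metric.isOpen_ball
    (convex_ball (0:ℝ) R).isPreconnected
    (g := fun m x => q m * x ^ m) (g' := fun (m : ℕ) x => ((m : ℝ) * q m) * x ^ (m - 1))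
    (y₀ := 0) (y := u)
  · intro m y _
    have h := (hasDerivAt_pow m y).const_mul (q m)
    rwa [show q m * ((m : ℝ) * y ^ (m - 1)) = ((m : ℝ) * q m) * y ^ (m - 1) by ring] at h
  · intro m y hy
    rw [mem_ball_zero_iff, Real.norm_eq_abs] at hy
    exact bessel_term_bound q hR1 hy.le (Nat.sub_le m 1) (bessel_coeff_bound1 q m)
  · rw [mem_ball_zero_iff]; simpa using hR0
  · apply summable_of_ne_finset_zero (s := Finset.range 1)
    intro m hm
    simp only [Finset.mem_range, not_lt] at hm
    have : m ≠ 0 := by omega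
    simp [zero_pow this]
  · rw [mem_ball_zero_iff, Real.norm_eq_abs]; exact huR

/-- Second derivative of the power series. -/
lemma bessel_hasDerivAt2 (q : ℕ → ℝ)
    (hsum : ∀ R : ℝ, 1 ≤ R → Summable (fun m : ℕ => ((m : ℝ) + 1) ^ 2 * |q m| * R ^ m))
    (u : ℝ) :
    HasDerivAt (fun x => ∑' m : ℕ, ((m : ℝ) * q m) * x ^ (m - 1))
      (∑' m : ℕ, (((m - 1 : ℕ) : ℝ) * ((m : ℝ) * q m)) * u ^ (m - 1 - 1)) u := by
  set R : ℝ := max (|u| + 1) 1 with hRdef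
  have hR1 : 1 ≤ R := le_max_right _ _
  have hR0 : 0 < R := lt_of_lt_of_le one_pos hR1
  have huR : |u| < R := lt_of_lt_of_le (by linarith [abs_nonneg u]) (le_max_left _ _)
  apply hasDerivAt_tsum_of_isPreconnected (hsum R hR1) Metric.isOpen_ball
    (convex_ball (0:ℝ) R).isPreconnected
    (g := fun (m : ℕ) x => ((m : ℝ) * q m) * x ^ (m - 1))
    (g' := fun (m : ℕ) x => (((m - 1 : ℕ) : ℝ) * ((m : ℝ) * q m)) * x ^ (m - 1 - 1))
    (y₀ := 0) (y := u)
  · intro m y _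
    have h := (hasDerivAt_pow (m - 1) y).const_mul ((m : ℝ) * q m)
    rwa [show ((m : ℝ) * q m) * (((m - 1 : ℕ) : ℝ) * y ^ (m - 1 - 1))
      = (((m - 1 : ℕ) : ℝ) * ((m : ℝ) * q m)) * y ^ (m - 1 - 1) by ring] at h
  · intro m y hy
    rw [mem_ball_zero_iff, Real.norm_eq_abs] at hy
    exact bessel_term_bound q hR1 hy.le (le_trans (Nat.sub_le _ 1) (Nat.sub_le m 1))
      (bessel_coeff_bound2 q m)
  · rw [mem_ball_zero_iff]; simpa using hR0
  · apply summable_of_ne_finset_zero (s := Finset.range 2)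
    intro m hm
    simp only [Finset.mem_range, not_lt] at hm
    have : m - 1 ≠ 0 := by omega
    simp [zero_pow this]
  · rw [mem_ball_zero_iff, Real.norm_eq_abs]; exact huR

/-- The key ODE identity for the coefficient series. -/
lemma bessel_ode_identity (q : ℕ → ℝ) (p r b c : ℝ)
    (hbr : b ^ 2 = 4 * c ^ 2 * r)
    (hrec : ∀ m : ℕ, q (m + 1) * (((m : ℝ) + 1) * ((m : ℝ) + 1 - p)) = -r * q m)
    (hsum : ∀ R : ℝ, 1 ≤ R → Summable (fun m : ℕ => ((m : ℝ) + 1) ^ 2 * |q m| * R ^ m))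
    (x : ℝ) :
    4 * c ^ 2 * x * (∑' m : ℕ, (((m - 1 : ℕ) : ℝ) * ((m : ℝ) * q m)) * x ^ (m - 1 - 1))
      + 4 * c ^ 2 * (1 - p) * (∑' m : ℕ, ((m : ℝ) * q m) * x ^ (m - 1))
      + b ^ 2 * (∑' m : ℕ, q m * x ^ m) = 0 := by
  have S0 := bessel_summable0 q hsum x
  have S1 := bessel_summable1 q hsum x
  have S2 := bessel_summable2 q hsum x
  set A2 : ℕ → ℝ := fun m => (((m - 1 : ℕ) : ℝ) * ((m : ℝ) * q m)) * x ^ (m - 1 - 1) with hA2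
  set A1 : ℕ → ℝ := fun m => ((m : ℝ) * q m) * x ^ (m - 1) with hA1
  have hU2 : Summable (fun m => (4 * c ^ 2 * x) * A2 m) := S2.mul_left _
  have hU1 : Summable (fun m => (4 * c ^ 2 * (1 - p)) * A1 m) := S1.mul_left _
  have hUsum : Summable (fun m => (4 * c ^ 2 * x) * A2 m + (4 * c ^ 2 * (1 - p)) * A1 m) :=
    hU2.add hU1
  have hUsucc : ∀ m : ℕ, (4 * c ^ 2 * x) * A2 (m + 1) + (4 * c ^ 2 * (1 - p)) * A1 (m + 1)
      = -(b ^ 2) * (q m * x ^ m) := by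
    intro m
    cases m with
    | zero =>
      simp only [hA2, hA1]
      norm_num
      linear_combination 4 * c ^ 2 * (hrec 0) + q 0 * hbr
    | succ k =>
      have hr1 := hrec (k + 1)
      push_cast at hr1
      simp only [hA2, hA1, Nat.add_sub_cancel]
      push_cast
      linear_combination (4 * c ^ 2 * x ^ (k + 1)) * hr1
        + (q (k + 1) * x ^ (k + 1)) * hbr
  have key : (4 * c ^ 2 * x) * (∑' m : ℕ, A2 m) + (4 * c ^ 2 * (1 - p)) * (∑' m : ℕ, A1 m)
      = -(b ^ 2 * ∑' m : ℕ, q m * x ^ m) := by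
    calc (4 * c ^ 2 * x) * (∑' m : ℕ, A2 m) + (4 * c ^ 2 * (1 - p)) * (∑' m : ℕ, A1 m)
        = ∑' m : ℕ, ((4 * c ^ 2 * x) * A2 m + (4 * c ^ 2 * (1 - p)) * A1 m) := by
          rw [← tsum_mul_left, ← tsum_mul_left]
          exact (Summable.tsum_add hU2 hU1).symm
      _ = ((4 * c ^ 2 * x) * A2 0 + (4 * c ^ 2 * (1 - p)) * A1 0)
          + ∑' m : ℕ, ((4 * c ^ 2 * x) * A2 (m + 1) + (4 * c ^ 2 * (1 - p)) * A1 (m + 1)) :=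
          Summable.tsum_eq_zero_add hUsum
      _ = ∑' m : ℕ, (-(b ^ 2) * (q m * x ^ m)) := by
          rw [tsum_congr hUsucc]
          simp [hA2, hA1]
      _ = -(b ^ 2 * ∑' m : ℕ, q m * x ^ m) := by rw [tsum_mul_left, neg_mul]
  linear_combination key

/-- Exact solution of a generalized Bessel equation with power-law coefficients,
`F'' + (a/t) F' + b² t^(2c-2) F = 0`, in terms of a fractional-derivative series. -/
theorem generalized_bessel_equation_exact_solution
    (a b c : ℝ) (hb : b ≠ 0) (hc : c ≠ 0)
    (p : ℝ) (hp : p = (1 - a) / (2 * c))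
    (hpnat : ∀ n : ℕ, p ≠ (n : ℝ) + 1)
    (F₀ : ℝ)
    (w : ℝ → ℝ) (hw : ∀ t : ℝ, 0 < t → w t = (b * t ^ c / (2 * c)) ^ 2)
    (F : ℝ → ℝ)
    (hF : ∀ t : ℝ, 0 < t →
      F t = F₀ * Real.Gamma (1 - p) *
        ∑' m : ℕ, (-1 : ℝ) ^ m * (w t) ^ m /
          ((m.factorial : ℝ) * Real.Gamma ((m : ℝ) + 1 - p))) :
    ∀ t : ℝ, 0 < t →
      DifferentiableAt ℝ F t ∧ DifferentiableAt ℝ (deriv F) t ∧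
      deriv (deriv F) t + (a / t) * deriv F t + b ^ 2 * t ^ (2 * c - 2) * F t = 0 := by
  intro t ht
  have h2c : (2 * c) ≠ 0 := mul_ne_zero two_ne_zero hc
  set r : ℝ := (b / (2 * c)) ^ 2 with hrdef
  have hr0 : (0:ℝ) ≤ r := sq_nonneg _
  have hbr : b ^ 2 = 4 * c ^ 2 * r := by rw [hrdef]; field_simp; ring
  set K : ℝ := F₀ * Real.Gamma (1 - p) with hK
  set q : ℕ → ℝ := fun m =>
    K * ((-1 : ℝ) ^ m * r ^ m / ((m.factorial : ℝ) * Real.Gamma ((m : ℝ) + 1 - p))) with hq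
  have hpm : ∀ m : ℕ, ((m : ℝ) + 1 - p) ≠ 0 := fun m h => hpnat m (by linarith)
  have hG : ∀ k : ℕ, Real.Gamma ((k : ℝ) + 1 - p) ≠ 0 := by
    intro k
    apply Real.Gamma_ne_zero
    intro j h
    apply hpnat (k + j)
    push_cast at h ⊢
    linarith
  have hrec : ∀ m : ℕ, q (m + 1) * (((m : ℝ) + 1) * ((m : ℝ) + 1 - p)) = -r * q m := by
    intro m
    have hΓs : Real.Gamma (((m + 1 : ℕ) : ℝ) + 1 - p)
        = ((m : ℝ) + 1 - p) * Real.Gamma ((m : ℝ) + 1 - p) := by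
      push_cast
      rw [show (m : ℝ) + 1 + 1 - p = ((m : ℝ) + 1 - p) + 1 by ring, Real.Gamma_add_one (hpm m)]
    have hfac : (((m + 1).factorial : ℕ) : ℝ) = ((m : ℝ) + 1) * (m.factorial : ℝ) := by
      rw [Nat.factorial_succ]; push_cast; ring
    simp only [hq]
    rw [hΓs, hfac]
    have h1 : (m.factorial : ℝ) ≠ 0 := Nat.cast_ne_zero.mpr (Nat.factorial_ne_zero m)
    have h2 := hG m
    have h3 := hpm m
    field_simp
    ring
  have habs : ∀ m : ℕ, |q (m + 1)| * (((m : ℝ) + 1) * |(m : ℝ) + 1 - p|) = r * |q m| := by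
    intro m
    have h2 : |q (m + 1) * (((m : ℝ) + 1) * ((m : ℝ) + 1 - p))| = |(-r) * q m| := by
      rw [hrec m]
    rw [abs_mul (q (m + 1)) (((m : ℝ) + 1) * ((m : ℝ) + 1 - p)),
      abs_mul ((m : ℝ) + 1) ((m : ℝ) + 1 - p),
      abs_of_nonneg (show (0:ℝ) ≤ (m : ℝ) + 1 by positivity),
      abs_mul (-r) (q m), abs_neg, abs_of_nonneg hr0] at h2
    exact h2
  have hsum : ∀ R : ℝ, 1 ≤ R → Summable (fun m : ℕ => ((m : ℝ) + 1) ^ 2 * |q m| * R ^ m) :=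
    fun R hR => bessel_master_summable q p r hr0 habs R (by linarith)
  -- the substituted function G s = g (s ^ (2c)) and its derivatives
  have hrpow : ∀ s : ℝ, 0 < s →
      HasDerivAt (fun y : ℝ => y ^ (2 * c)) (2 * c * s ^ (2 * c - 1)) s :=
    fun s hs => Real.hasDerivAt_rpow_const (Or.inl hs.ne')
  have hGder : ∀ s : ℝ, 0 < s →
      HasDerivAt (fun y : ℝ => ∑' m : ℕ, q m * (y ^ (2 * c)) ^ m)
        ((∑' m : ℕ, ((m : ℝ) * q m) * (s ^ (2 * c)) ^ (m - 1)) * (2 * c * s ^ (2 * c - 1))) s := by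
    intro s hs
    have h := HasDerivAt.comp s (bessel_hasDerivAt1 q hsum (s ^ (2 * c))) (hrpow s hs)
    exact h
  have hG1der : ∀ s : ℝ, 0 < s →
      HasDerivAt (fun y : ℝ =>
          (∑' m : ℕ, ((m : ℝ) * q m) * (y ^ (2 * c)) ^ (m - 1)) * (2 * c * y ^ (2 * c - 1)))
        ((∑' m : ℕ, (((m - 1 : ℕ) : ℝ) * ((m : ℝ) * q m)) * (s ^ (2 * c)) ^ (m - 1 - 1))
            * (2 * c * s ^ (2 * c - 1)) * (2 * c * s ^ (2 * c - 1))
          + (∑' m : ℕ, ((m : ℝ) * q m) * (s ^ (2 * c)) ^ (m - 1))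
            * (2 * c * ((2 * c - 1) * s ^ (2 * c - 1 - 1)))) s := by
    intro s hs
    have h1 : HasDerivAt (fun y : ℝ => ∑' m : ℕ, ((m : ℝ) * q m) * (y ^ (2 * c)) ^ (m - 1))
        ((∑' m : ℕ, (((m - 1 : ℕ) : ℝ) * ((m : ℝ) * q m)) * (s ^ (2 * c)) ^ (m - 1 - 1))
          * (2 * c * s ^ (2 * c - 1))) s := by
      have h := HasDerivAt.comp s (bessel_hasDerivAt2 q hsum (s ^ (2 * c))) (hrpow s hs)
      exact h
    have h2 : HasDerivAt (fun y : ℝ => 2 * c * y ^ (2 * c - 1))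
        (2 * c * ((2 * c - 1) * s ^ (2 * c - 1 - 1))) s :=
      (Real.hasDerivAt_rpow_const (Or.inl hs.ne')).const_mul (2 * c)
    exact h1.mul h2
  -- F agrees with G on Ioi 0
  have hGF : ∀ s : ℝ, 0 < s → F s = ∑' m : ℕ, q m * (s ^ (2 * c)) ^ m := by
    intro s hs
    have hsc : (s ^ c) ^ 2 = s ^ (2 * c) := by
      rw [← Real.rpow_natCast (s ^ c) 2, ← Real.rpow_mul hs.le]
      norm_num [mul_comm]
    have hws : w s = r * s ^ (2 * c) := by
      rw [hw s hs, hrdef, ← hsc]; ring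
    rw [hF s hs, ← tsum_mul_left]
    exact tsum_congr fun m => by rw [hws, hq]; rw [mul_pow]; ring
  have hFG : F =ᶠ[nhds t] fun y : ℝ => ∑' m : ℕ, q m * (y ^ (2 * c)) ^ m :=
    Filter.eventuallyEq_of_mem (Ioi_mem_nhds ht) fun s hs => hGF s hs
  have hd1 : DifferentiableAt ℝ F t :=
    hFG.differentiableAt_iff.mpr (hGder t ht).differentiableAt
  have hderivFG : deriv F =ᶠ[nhds t] fun y : ℝ =>
      (∑' m : ℕ, ((m : ℝ) * q m) * (y ^ (2 * c)) ^ (m - 1)) * (2 * c * y ^ (2 * c - 1)) :=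
    hFG.deriv.trans (Filter.eventuallyEq_of_mem (Ioi_mem_nhds ht)
      fun s hs => (hGder s hs).deriv)
  have hd2 : DifferentiableAt ℝ (deriv F) t :=
    hderivFG.differentiableAt_iff.mpr (hG1der t ht).differentiableAt
  refine ⟨hd1, hd2, ?_⟩
  have hv1 : deriv F t
      = (∑' m : ℕ, ((m : ℝ) * q m) * (t ^ (2 * c)) ^ (m - 1)) * (2 * c * t ^ (2 * c - 1)) :=
    hderivFG.eq_of_nhds
  have hv2 : deriv (deriv F) t
      = (∑' m : ℕ, (((m - 1 : ℕ) : ℝ) * ((m : ℝ) * q m)) * (t ^ (2 * c)) ^ (m - 1 - 1))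
            * (2 * c * t ^ (2 * c - 1)) * (2 * c * t ^ (2 * c - 1))
          + (∑' m : ℕ, ((m : ℝ) * q m) * (t ^ (2 * c)) ^ (m - 1))
            * (2 * c * ((2 * c - 1) * t ^ (2 * c - 1 - 1))) := by
    rw [hderivFG.deriv_eq]
    exact (hG1der t ht).deriv
  have hkey := bessel_ode_identity q p r b c hbr hrec hsum (t ^ (2 * c))
  set P2 : ℝ := ∑' m : ℕ, (((m - 1 : ℕ) : ℝ) * ((m : ℝ) * q m)) * (t ^ (2 * c)) ^ (m - 1 - 1)
    with hP2
  set P1 : ℝ := ∑' m : ℕ, ((m : ℝ) * q m) * (t ^ (2 * c)) ^ (m - 1) with hP1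
  set P0 : ℝ := ∑' m : ℕ, q m * (t ^ (2 * c)) ^ m with hP0
  rw [hv1, hv2, hGF t ht, ← hP0]
  have ha : 2 * c * p = 1 - a := by rw [hp]; field_simp
  have e0 : t ^ (2 * c - 1 - 1) = t ^ (2 * c - 2) := by
    rw [show (2 * c - 1 - 1 : ℝ) = 2 * c - 2 by ring]
  have e1 : t ^ (2 * c - 1) = t * t ^ (2 * c - 2) := by
    rw [show (2 * c - 1 : ℝ) = 1 + (2 * c - 2) by ring, Real.rpow_add ht, Real.rpow_one]
  have e2 : t ^ (2 * c) = t * (t * t ^ (2 * c - 2)) := by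
    have h1 : t ^ ((1 : ℝ) + (1 + (2 * c - 2))) = t * (t * t ^ (2 * c - 2)) := by
      rw [Real.rpow_add ht, Real.rpow_add ht, Real.rpow_one]
    rw [show (1 : ℝ) + (1 + (2 * c - 2)) = 2 * c by ring] at h1
    exact h1
  rw [e2] at hkey
  rw [e0, e1]
  have htne : t ≠ 0 := ht.ne'
  have hat : a / t * t = a := div_mul_cancel₀ a htne
  linear_combination (t ^ (2 * c - 2)) * hkey
    + (2 * c * t ^ (2 * c - 2) * P1) * ha + (2 * c * t ^ (2 * c - 2) * P1) * hat
end

section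
/- Let p be a real number that is not a positive integer, and define y(w) = ∑_{m=0}^∞ (-1)^m·w^m/(m!·Γ(m+1-p)) for real w. Then y is twice differentiable and satisfies w·y''(w) + (1-p)·y'(w) + y(w) = 0 for all real w. -/
open Real

open Filter FormalMultilinearSeries

noncomputable def bc (p : ℝ) (j : ℕ) (n : ℕ) : ℝ :=
  (-1) ^ (n + j) / ((n.factorial : ℝ) * Real.Gamma ((n : ℝ) + 1 + j - p))

lemma bc_gamma_ne {p : ℝ} (hp : ∀ n : ℕ, p ≠ (n : ℝ) + 1) (j n : ℕ) :
    Real.Gamma ((n : ℝ) + 1 + j - p) ≠ 0 := by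
  apply Real.Gamma_ne_zero
  intro m hm
  exact hp (n + j + m) (by push_cast; linarith)

lemma bc_arg_ne {p : ℝ} (hp : ∀ n : ℕ, p ≠ (n : ℝ) + 1) (j n : ℕ) :
    (n : ℝ) + 1 + j - p ≠ 0 := by
  intro h
  exact hp (n + j) (by push_cast; linarith)

lemma bc_ne {p : ℝ} (hp : ∀ n : ℕ, p ≠ (n : ℝ) + 1) (j n : ℕ) : bc p j n ≠ 0 := by
  unfold bc
  exact div_ne_zero (pow_ne_zero _ (by norm_num))
    (mul_ne_zero (Nat.cast_ne_zero.2 n.factorial_ne_zero) (bc_gamma_ne hp j n))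

lemma bc_succ {p : ℝ} (hp : ∀ n : ℕ, p ≠ (n : ℝ) + 1) (j n : ℕ) :
    bc p (j + 1) n = ((n : ℝ) + 1) * bc p j (n + 1) := by
  unfold bc
  have h1 : ((n + 1 : ℕ) : ℝ) + 1 + j - p = (n : ℝ) + 1 + ((j : ℝ) + 1) - p := by
    push_cast; ring
  have h2 : n + (j + 1) = (n + 1) + j := by ring
  rw [h1, h2, Nat.factorial_succ]
  have hΓ : Real.Gamma ((n : ℝ) + 1 + ((j:ℝ) + 1) - p) ≠ 0 := by
    have := bc_gamma_ne hp (j + 1) n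
    rwa [show ((n : ℝ) + 1 + ((j + 1 : ℕ):ℝ) - p) = (n : ℝ) + 1 + ((j:ℝ) + 1) - p by push_cast; ring] at this
  have hf : ((n.factorial : ℝ)) ≠ 0 := Nat.cast_ne_zero.2 n.factorial_ne_zero
  have hn1 : ((n:ℝ) + 1) ≠ 0 := by positivity
  push_cast
  field_simp

lemma bc_rec {p : ℝ} (hp : ∀ n : ℕ, p ≠ (n : ℝ) + 1) (n : ℕ) :
    ((n : ℝ) + 1 - p) * bc p 1 n + bc p 0 n = 0 := by
  unfold bc
  have hx : (n : ℝ) + 1 - p ≠ 0 := by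
    have := bc_arg_ne hp 0 n; push_cast at this; simpa using this
  have hΓ : Real.Gamma ((n : ℝ) + 1 - p) ≠ 0 := by
    have := bc_gamma_ne hp 0 n; push_cast at this; simpa using this
  have hG : Real.Gamma ((n : ℝ) + 1 + 1 - p) = ((n : ℝ) + 1 - p) * Real.Gamma ((n : ℝ) + 1 - p) := by
    rw [show (n : ℝ) + 1 + 1 - p = ((n : ℝ) + 1 - p) + 1 by ring, Real.Gamma_add_one hx]
  have hf : ((n.factorial : ℝ)) ≠ 0 := Nat.cast_ne_zero.2 n.factorial_ne_zero
  push_cast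
  rw [hG, pow_succ]
  field_simp
  have hΓ' : Real.Gamma (1 + (n : ℝ) - p) ≠ 0 := by rwa [add_comm 1 (n : ℝ)]
  ring_nf
  simp [hΓ']

lemma bc_radius {p : ℝ} (hp : ∀ n : ℕ, p ≠ (n : ℝ) + 1) (j : ℕ) :
    (ofScalars ℝ (bc p j)).radius = ⊤ := by
  apply ofScalars_radius_eq_top_of_tendsto
  · exact Eventually.of_forall fun n => bc_ne hp j n
  · have key : ∀ n : ℕ, ‖bc p j n.succ‖ / ‖bc p j n‖
        = (((n : ℝ) + 1) * |(n : ℝ) + 1 + j - p|)⁻¹ := by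
      intro n
      have hx := bc_arg_ne hp j n
      have hΓ := bc_gamma_ne hp j n
      have hG : Real.Gamma (((n + 1 : ℕ) : ℝ) + 1 + j - p)
          = ((n : ℝ) + 1 + j - p) * Real.Gamma ((n : ℝ) + 1 + j - p) := by
        rw [show ((n + 1 : ℕ) : ℝ) + 1 + j - p = ((n : ℝ) + 1 + j - p) + 1 by push_cast; ring,
          Real.Gamma_add_one hx]
      unfold bc
      rw [Nat.succ_eq_add_one, Nat.factorial_succ, hG]
      simp only [Real.norm_eq_abs, abs_div, abs_mul, abs_pow, abs_neg, abs_one, one_pow,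
        Nat.abs_cast, Nat.cast_mul, Nat.cast_add, Nat.cast_one]
      have hf : (0:ℝ) < (n.factorial : ℝ) := by positivity
      have hn1 : (0:ℝ) < (n:ℝ) + 1 := by positivity
      have hax : 0 < |(n : ℝ) + 1 + j - p| := abs_pos.2 hx
      have haΓ : 0 < |Real.Gamma ((n : ℝ) + 1 + j - p)| := abs_pos.2 hΓ
      field_simp
      rw [abs_of_pos hn1]
    rw [funext key]
    apply Tendsto.inv_tendsto_atTop
    apply tendsto_atTop_mono' atTop _ (tendsto_atTop_add_const_right atTop (1:ℝ)
      tendsto_natCast_atTop_atTop)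
    obtain ⟨N, hN⟩ := exists_nat_ge p
    filter_upwards [eventually_ge_atTop N] with n hn
    have hx : (1:ℝ) ≤ (n : ℝ) + 1 + j - p := by
      have h1 : (N : ℝ) ≤ n := Nat.cast_le.2 hn
      have hj : (0:ℝ) ≤ j := Nat.cast_nonneg j
      linarith
    calc (n:ℝ) + 1 = ((n:ℝ) + 1) * 1 := by ring
    _ ≤ ((n:ℝ) + 1) * |(n : ℝ) + 1 + j - p| := by
        apply mul_le_mul_of_nonneg_left (hx.trans (le_abs_self _)) (by positivity)

lemma bc_ball (hp : ∀ n : ℕ, p ≠ (n : ℝ) + 1) (j : ℕ) :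
    HasFPowerSeriesOnBall (ofScalars ℝ (bc p j)).sum (ofScalars ℝ (bc p j)) 0 ⊤ := by
  have h := (ofScalars ℝ (bc p j)).hasFPowerSeriesOnBall
    (by rw [bc_radius hp j]; exact ENNReal.zero_lt_top)
  rwa [bc_radius hp j] at h

lemma bc_hasSum (hp : ∀ n : ℕ, p ≠ (n : ℝ) + 1) (j : ℕ) (w : ℝ) :
    HasSum (fun n => bc p j n * w ^ n) ((ofScalars ℝ (bc p j)).sum w) := by
  have h := (ofScalars ℝ (bc p j)).hasSum (x := w)
    (by rw [bc_radius hp j]; exact edist_lt_top _ _)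
  have hfun : (fun n => (ofScalars ℝ (bc p j)) n fun _ => w) = fun n => bc p j n * w ^ n := by
    funext n; rw [ofScalars_apply_eq]; simp [smul_eq_mul]
  rwa [hfun] at h

lemma bc_deriv (hp : ∀ n : ℕ, p ≠ (n : ℝ) + 1) (j : ℕ) :
    deriv (ofScalars ℝ (bc p j)).sum = (ofScalars ℝ (bc p (j + 1))).sum := by
  have hball := bc_ball hp j
  have han : AnalyticOnNhd ℝ (ofScalars ℝ (bc p j)).sum Set.univ := by
    have := hball.analyticOnNhd
    rwa [Metric.emetric_ball_top] at this
  have hcont1 : Continuous (deriv (ofScalars ℝ (bc p j)).sum) := by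
    rw [← continuousOn_univ]
    exact (han.deriv).continuousOn
  have hcont2 : Continuous (ofScalars ℝ (bc p (j + 1))).sum := by
    rw [← continuousOn_univ]
    have := (bc_ball hp (j + 1)).analyticOnNhd
    rw [Metric.emetric_ball_top] at this
    exact this.continuousOn
  apply (Continuous.ext_on (dense_compl_singleton (0:ℝ)) hcont1 hcont2)
  intro w hw
  have hw' : w ≠ 0 := hw
  have h1 : HasSum (fun n => (ofScalars ℝ (bc p j)).derivSeries n (fun _ => w))
      (fderiv ℝ (ofScalars ℝ (bc p j)).sum (0 + w)) :=
    hball.fderiv.hasSum (by exact edist_lt_top _ _)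
  have h2 := h1.mapL (ContinuousLinearMap.apply ℝ ℝ w)
  simp only [ContinuousLinearMap.apply_apply] at h2
  have h3 : (fun n => (ofScalars ℝ (bc p j)).derivSeries n (fun _ => w) w)
      = fun n => (bc p (j + 1) n * w ^ n) * w := by
    funext n
    rw [derivSeries_apply_diag, ofScalars_apply_eq, bc_succ hp j n]
    simp [smul_eq_mul]
    ring
  rw [h3] at h2
  have h4 := (bc_hasSum hp (j + 1) w).mul_right w
  have h5 := h4.unique h2
  have h6 : fderiv ℝ (ofScalars ℝ (bc p j)).sum (0 + w) w
      = w * deriv (ofScalars ℝ (bc p j)).sum (0 + w) := by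
    rw [← fderiv_apply_one_eq_deriv]
    rw [show w = w • (1:ℝ) by simp, ContinuousLinearMap.map_smul]
    simp [smul_eq_mul]
  rw [h6, zero_add] at h5
  rw [mul_comm] at h5
  exact (mul_left_cancel₀ hw' h5).symm



/-- The entire function `y(w) = ∑_m (-1)^m w^m/(m! Γ(m+1-p))` satisfies
`w y'' + (1-p) y' + y = 0`. -/
theorem bessel_type_series_solves_ode
    (p : ℝ) (hp : ∀ n : ℕ, p ≠ (n : ℝ) + 1)
    (y : ℝ → ℝ)
    (hy : ∀ w : ℝ,
      y w = ∑' m : ℕ, (-1 : ℝ) ^ m * w ^ m /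
        ((m.factorial : ℝ) * Real.Gamma ((m : ℝ) + 1 - p))) :
    Differentiable ℝ y ∧ Differentiable ℝ (deriv y) ∧
    ∀ w : ℝ, w * deriv (deriv y) w + (1 - p) * deriv y w + y w = 0 := by
  have hy0 : y = (ofScalars ℝ (bc p 0)).sum := by
    funext w
    rw [hy w, FormalMultilinearSeries.sum]
    apply tsum_congr
    intro n
    rw [ofScalars_apply_eq]
    unfold bc
    push_cast
    simp [smul_eq_mul]
    ring
  have hdiff : ∀ j : ℕ, Differentiable ℝ (ofScalars ℝ (bc p j)).sum := by
    intro j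
    intro w
    have := (bc_ball hp j).analyticOnNhd
    rw [Metric.emetric_ball_top] at this
    exact (this w (Set.mem_univ w)).differentiableAt
  have hd1 : deriv y = (ofScalars ℝ (bc p 1)).sum := by
    rw [hy0]; exact bc_deriv hp 0
  have hd2 : deriv (deriv y) = (ofScalars ℝ (bc p 2)).sum := by
    rw [hd1]; exact bc_deriv hp 1
  refine ⟨hy0 ▸ hdiff 0, hd1 ▸ hdiff 1, fun w => ?_⟩
  have hc := bc_hasSum hp 0 w
  have hd := bc_hasSum hp 1 w
  have he := bc_hasSum hp 2 w
  rw [← hy0] at hc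
  rw [← hd1] at hd
  rw [← hd2] at he
  -- w * y'' as a sum
  have h6 : HasSum (fun n : ℕ => ((n : ℝ) + 1) * bc p 1 (n + 1) * w ^ (n + 1))
      (w * deriv (deriv y) w) := by
    have h := he.mul_left w
    have hfun : (fun n => w * (bc p 2 n * w ^ n))
        = fun n : ℕ => ((n : ℝ) + 1) * bc p 1 (n + 1) * w ^ (n + 1) := by
      funext n
      rw [show (2 : ℕ) = 1 + 1 from rfl, bc_succ hp 1 n]
      ring
    rwa [hfun] at h
  have h7 : HasSum (fun n : ℕ => (n : ℝ) * bc p 1 n * w ^ n) (w * deriv (deriv y) w) := by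
    have h6' : HasSum (fun n => (fun m : ℕ => (m : ℝ) * bc p 1 m * w ^ m) (n + 1))
        (w * deriv (deriv y) w) := by
      have hfun : (fun n => (fun m : ℕ => (m : ℝ) * bc p 1 m * w ^ m) (n + 1))
          = fun n : ℕ => ((n : ℝ) + 1) * bc p 1 (n + 1) * w ^ (n + 1) := by
        funext n; push_cast; ring
      rw [hfun]; exact h6
    have := (hasSum_nat_add_iff (f := fun m : ℕ => (m : ℝ) * bc p 1 m * w ^ m) 1).mp h6'
    simpa using this
  have htot := (h7.add (hd.mul_left (1 - p))).add hc
  have hzero : (fun n : ℕ => ((n : ℝ) * bc p 1 n * w ^ n + (1 - p) * (bc p 1 n * w ^ n))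
      + bc p 0 n * w ^ n) = fun _ => (0 : ℝ) := by
    funext n
    have := bc_rec hp n
    have : (((n : ℝ) + 1 - p) * bc p 1 n + bc p 0 n) * w ^ n = 0 := by rw [this]; ring
    linarith [this]
  rw [hzero] at htot
  exact htot.unique hasSum_zero
end

section
/- Define J(w) = ∑_{m=0}^∞ (-1)^m·w^m/(m!)² for w ≥ 0 (so that J(w) = J₀(2√w), the Bessel function of the first kind of order zero evaluated at 2√w). Then for every real s > 0, the Laplace transform integral ∫_0^∞ exp(-s·w)·J(w) dw converges and equals exp(-1/s)/s. -/
open Real MeasureTheory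

lemma my_integrable_tsum {μ : Measure ℝ} {F : ℕ → ℝ → ℝ}
    (hF_int : ∀ i, Integrable (F i) μ)
    (hF_sum : Summable fun i => ∫ a, ‖F i a‖ ∂μ) :
    Integrable (fun a => ∑' i, F i a) μ := by
  have hf'' : ∀ i, AEMeasurable (fun x => (‖F i x‖₊ : ENNReal)) μ :=
    fun i => (hF_int i).1.aemeasurable.enorm
  have key : ∑' i, ∫⁻ a, ‖F i a‖₊ ∂μ ≠ ⊤ := by
    have h1 : ∀ i, ∫⁻ a, (‖F i a‖₊ : ENNReal) ∂μ = ENNReal.ofReal (∫ a, ‖F i a‖ ∂μ) :=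
      fun i => (ofReal_integral_norm_eq_lintegral_enorm (hF_int i)).symm
    rw [funext h1, ← ENNReal.ofReal_tsum_of_nonneg
      (fun i => integral_nonneg fun a => norm_nonneg _) hF_sum]
    exact ENNReal.ofReal_ne_top
  have hhh : ∀ᵐ a ∂μ, Summable fun n => ((‖F n a‖₊ : NNReal) : ℝ) := by
    have key2 : ∫⁻ a, ∑' i, (‖F i a‖₊ : ENNReal) ∂μ ≠ ⊤ := by
      rwa [lintegral_tsum hf'']
    refine (ae_lt_top' (AEMeasurable.ennreal_tsum hf'') key2).mono fun x hx => ?_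
    rw [← ENNReal.tsum_coe_ne_top_iff_summable_coe]
    exact hx.ne
  have hsummable : ∀ᵐ a ∂μ, Summable fun n => F n a := by
    filter_upwards [hhh] with a ha
    refine Summable.of_norm ?_
    simpa [coe_nnnorm] using ha
  constructor
  · refine aestronglyMeasurable_of_tendsto_ae (f := fun n a => ∑ i ∈ Finset.range n, F i a)
      Filter.atTop
      (fun n => Finset.aestronglyMeasurable_fun_sum _ fun i _ => (hF_int i).1) ?_
    filter_upwards [hsummable] with a ha
    exact ha.hasSum.tendsto_sum_nat
  · have hle : ∫⁻ a, (‖∑' i, F i a‖₊ : ENNReal) ∂μ ≤ ∑' i, ∫⁻ a, ‖F i a‖₊ ∂μ := by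
      rw [← lintegral_tsum hf'']
      refine lintegral_mono_ae ?_
      filter_upwards [hhh] with a ha
      have hsn : Summable fun n => ‖F n a‖₊ := NNReal.summable_coe.mp ha
      calc (‖∑' i, F i a‖₊ : ENNReal) ≤ ((∑' i, ‖F i a‖₊ : NNReal) : ENNReal) :=
            ENNReal.coe_le_coe.2 (nnnorm_tsum_le hsn)
        _ = ∑' i, (‖F i a‖₊ : ENNReal) := ENNReal.coe_tsum hsn
    exact hle.trans_lt key.lt_top

/-- Laplace transform of `J₀(2√w)`: `∫_0^∞ e^{-sw} J₀(2√w) dw = e^{-1/s}/s` for `s > 0`. -/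
theorem laplace_transform_bessel_J0_sqrt
    (J : ℝ → ℝ)
    (hJ : ∀ w : ℝ, 0 ≤ w →
      J w = ∑' m : ℕ, (-1 : ℝ) ^ m * w ^ m / ((m.factorial : ℝ)) ^ 2) :
    ∀ s : ℝ, 0 < s →
      IntegrableOn (fun w : ℝ => Real.exp (-(s * w)) * J w) (Set.Ioi 0) ∧
      ∫ w in Set.Ioi (0 : ℝ), Real.exp (-(s * w)) * J w =
        Real.exp (-(1 / s)) / s := by
  intro s hs
  set F : ℕ → ℝ → ℝ := fun m w =>
    ((-1 : ℝ) ^ m / ((m.factorial : ℝ)) ^ 2) * (w ^ m * Real.exp (-(s * w))) with hF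
  -- integrability of each monomial term
  have hmono : ∀ m : ℕ, IntegrableOn (fun w : ℝ => w ^ m * Real.exp (-(s * w)))
      (Set.Ioi 0) := by
    intro m
    have h := integrableOn_rpow_mul_exp_neg_mul_rpow
      (s := (m : ℝ)) (p := 1) (b := s)
      ((neg_lt_zero.2 one_pos).trans_le (Nat.cast_nonneg m)) one_pos hs
    refine (h.congr_fun (fun x hx => ?_) measurableSet_Ioi)
    simp only [Real.rpow_one, Real.rpow_natCast, neg_mul]
  have hFint : ∀ m, Integrable (F m) (volume.restrict (Set.Ioi 0)) :=
    fun m => ((hmono m).const_mul _)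
  -- value of each monomial integral
  have hval : ∀ m : ℕ, ∫ w in Set.Ioi (0 : ℝ), w ^ m * Real.exp (-(s * w)) =
      (1 / s) ^ (m + 1) * (m.factorial : ℝ) := by
    intro m
    have h := integral_rpow_mul_exp_neg_mul_Ioi (a := (m : ℝ) + 1) (r := s)
      (by positivity) hs
    rw [show ((m : ℝ) + 1 - 1) = (m : ℝ) by ring] at h
    have h2 : ∫ w in Set.Ioi (0 : ℝ), w ^ m * Real.exp (-(s * w)) =
        ∫ t in Set.Ioi (0 : ℝ), t ^ (m : ℝ) * Real.exp (-(s * t)) := by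
      refine setIntegral_congr_fun measurableSet_Ioi (fun x hx => ?_)
      rw [Real.rpow_natCast]
    rw [h2, h, Real.Gamma_nat_eq_factorial]
    congr 1
    rw [← Real.rpow_natCast (1 / s) (m + 1)]
    push_cast
    ring_nf
  -- norm integrals
  have hnorm : ∀ m : ℕ, ∫ w in Set.Ioi (0 : ℝ), ‖F m w‖ =
      (1 / ((m.factorial : ℝ)) ^ 2) * ((1 / s) ^ (m + 1) * (m.factorial : ℝ)) := by
    intro m
    have h1 : ∫ w in Set.Ioi (0 : ℝ), ‖F m w‖ =
        ∫ w in Set.Ioi (0 : ℝ), (1 / ((m.factorial : ℝ)) ^ 2) *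
          (w ^ m * Real.exp (-(s * w))) := by
      refine setIntegral_congr_fun measurableSet_Ioi (fun x hx => ?_)
      have hx0 : (0 : ℝ) ≤ x := le_of_lt hx
      rw [hF]
      simp only [Real.norm_eq_abs, abs_mul, abs_div, abs_pow, abs_neg, abs_one,
        one_pow, abs_of_nonneg hx0, abs_of_nonneg (Real.exp_nonneg _),
        Nat.abs_cast]
    rw [h1, integral_const_mul, hval m]
  have hsummable_norm : Summable fun m => ∫ w in Set.Ioi (0 : ℝ), ‖F m w‖ := by
    rw [funext hnorm]
    have : Summable fun m : ℕ => (1 / s) * ((1 / s) ^ m / (m.factorial : ℝ)) :=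
      (Real.summable_pow_div_factorial (1 / s)).mul_left _
    refine this.congr fun m => ?_
    have hfac : (0 : ℝ) < (m.factorial : ℝ) := by positivity
    field_simp
    ring_nf; rw [mul_inv_cancel₀ hs.ne', one_mul]
  -- pointwise identity on Ioi 0
  have hptwise : ∀ w ∈ Set.Ioi (0 : ℝ),
      Real.exp (-(s * w)) * J w = ∑' m, F m w := by
    intro w hw
    rw [hJ w (le_of_lt hw), ← tsum_mul_left]
    refine tsum_congr fun m => ?_
    rw [hF]
    ring
  have hInt : IntegrableOn (fun w : ℝ => Real.exp (-(s * w)) * J w) (Set.Ioi 0) := by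
    have h := my_integrable_tsum hFint hsummable_norm
    exact h.congr ((ae_restrict_iff' measurableSet_Ioi).2
      (Filter.Eventually.of_forall fun w hw => (hptwise w hw).symm))
  refine ⟨hInt, ?_⟩
  have hswap : ∫ w in Set.Ioi (0 : ℝ), Real.exp (-(s * w)) * J w =
      ∑' m, ∫ w in Set.Ioi (0 : ℝ), F m w := by
    rw [setIntegral_congr_fun measurableSet_Ioi hptwise]
    exact (integral_tsum_of_summable_integral_norm hFint hsummable_norm).symm
  rw [hswap]
  have hterm : ∀ m : ℕ, ∫ w in Set.Ioi (0 : ℝ), F m w =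
      (1 / s) * ((-(1 / s)) ^ m / (m.factorial : ℝ)) := by
    intro m
    rw [hF]
    simp only
    rw [integral_const_mul, hval m]
    have hfac : (0 : ℝ) < (m.factorial : ℝ) := by positivity
    rw [neg_pow]
    field_simp
    ring_nf; rw [mul_inv_cancel₀ hs.ne', one_mul]
  rw [tsum_congr hterm, tsum_mul_left]
  have hexp : ∑' m : ℕ, (-(1 / s)) ^ m / (m.factorial : ℝ) = Real.exp (-(1 / s)) := by
    rw [Real.exp_eq_exp_ℝ, NormedSpace.exp_eq_tsum_div]
  rw [hexp]
  ring
end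

section
/- Let p be a real number that is not an integer, and define F(w) = Γ(1-p)·∑_{m=0}^∞ (-1)^m·w^m/(m!·Γ(m+1-p)) for w ≥ 0. Then for every real s > 0, the Laplace transform integral ∫_0^∞ exp(-s·w)·F(w) dw converges and equals ∑_{m=0}^∞ Γ(p-m)/(Γ(p)·s^(m+1)), where this series also converges. -/
open Real MeasureTheory

/-- Nonvanishing of Gamma at `k - p` for non-integer `p`. -/
lemma aux_gamma_ne₁ (p : ℝ) (hp : ∀ n : ℤ, p ≠ (n : ℝ)) (k : ℤ) :
    Real.Gamma ((k : ℝ) - p) ≠ 0 := by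
  refine Real.Gamma_ne_zero fun m => ?_
  intro h
  exact hp (k + m) (by push_cast; linarith)

/-- Nonvanishing of Gamma at `p - k` for non-integer `p`. -/
lemma aux_gamma_ne₂ (p : ℝ) (hp : ∀ n : ℤ, p ≠ (n : ℝ)) (k : ℤ) :
    Real.Gamma (p - (k : ℝ)) ≠ 0 := by
  refine Real.Gamma_ne_zero fun m => ?_
  intro h
  exact hp (k - m) (by push_cast; linarith)

/-- The key Gamma identity `Γ(p-m) = Γ(p) * (-1)^m Γ(1-p) / Γ(m+1-p)`. -/
lemma aux_gamma_id (p : ℝ) (hp : ∀ n : ℤ, p ≠ (n : ℝ)) (m : ℕ) :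
    Real.Gamma (p - (m : ℝ)) =
      Real.Gamma p * ((-1 : ℝ) ^ m * Real.Gamma (1 - p) / Real.Gamma ((m : ℝ) + 1 - p)) := by
  induction m with
  | zero =>
      have h1p : Real.Gamma (1 - p) ≠ 0 := by
        have := aux_gamma_ne₁ p hp 1; simpa using this
      simp only [Nat.cast_zero, sub_zero, pow_zero, zero_add, one_mul]
      field_simp
  | succ m ih =>
      have hne : p - ((m : ℝ) + 1) ≠ 0 := by
        intro h
        exact hp ((m : ℤ) + 1) (by push_cast; linarith)
      have hq : Real.Gamma ((m : ℝ) + 1 - p) ≠ 0 := by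
        have := aux_gamma_ne₁ p hp ((m : ℤ) + 1)
        push_cast at this
        exact this
      have hq1 : ((m : ℝ) + 1 - p) ≠ 0 := fun h => hp ((m : ℤ) + 1) (by push_cast; linarith)
      have e1 : Real.Gamma (p - (m : ℝ)) =
          (p - ((m : ℝ) + 1)) * Real.Gamma (p - ((m : ℝ) + 1)) := by
        have := Real.Gamma_add_one hne
        rw [show p - ((m : ℝ) + 1) + 1 = p - (m : ℝ) by ring] at this
        exact this
      have e2 : Real.Gamma (((m : ℕ) + 1 : ℕ) + 1 - p) =
          ((m : ℝ) + 1 - p) * Real.Gamma ((m : ℝ) + 1 - p) := by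
        have := Real.Gamma_add_one hq1
        rw [show (m : ℝ) + 1 - p + 1 = (((m : ℕ) + 1 : ℕ) : ℝ) + 1 - p by push_cast; ring] at this
        exact_mod_cast this
      rw [e1] at ih
      push_cast at e2 ⊢
      rw [e2]
      field_simp at ih ⊢
      first
      | linear_combination -ih
      | linear_combination ih
      | linear_combination Real.Gamma p * ih
      | nlinarith [ih]

/-- Laplace transform of the generalized Bessel solution equals the series
`∑_m Γ(p-m)/(Γ(p) s^(m+1))`. -/
theorem laplace_transform_generalized_bessel_solution
    (p : ℝ) (hp : ∀ n : ℤ, p ≠ (n : ℝ))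
    (F : ℝ → ℝ)
    (hF : ∀ w : ℝ, 0 ≤ w →
      F w = Real.Gamma (1 - p) *
        ∑' m : ℕ, (-1 : ℝ) ^ m * w ^ m /
          ((m.factorial : ℝ) * Real.Gamma ((m : ℝ) + 1 - p))) :
    ∀ s : ℝ, 0 < s →
      IntegrableOn (fun w : ℝ => Real.exp (-(s * w)) * F w) (Set.Ioi 0) ∧
      Summable (fun m : ℕ => Real.Gamma (p - (m : ℝ)) / (Real.Gamma p * s ^ (m + 1))) ∧
      ∫ w in Set.Ioi (0 : ℝ), Real.exp (-(s * w)) * F w =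
        ∑' m : ℕ, Real.Gamma (p - (m : ℝ)) / (Real.Gamma p * s ^ (m + 1)) := by
  intro s hs
  set q : ℕ → ℝ := fun m => Real.Gamma ((m : ℝ) + 1 - p) with hqdef
  have hq : ∀ m : ℕ, q m ≠ 0 := by
    intro m
    have := aux_gamma_ne₁ p hp ((m : ℤ) + 1)
    push_cast at this
    exact this
  have h1p : Real.Gamma (1 - p) ≠ 0 := by
    have := aux_gamma_ne₁ p hp 1; simpa using this
  have hΓp : Real.Gamma p ≠ 0 := by
    have := aux_gamma_ne₂ p hp 0; simpa using this
  have hqrec : ∀ m : ℕ, q (m + 1) = ((m : ℝ) + 1 - p) * q m := by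
    intro m
    have hq1 : ((m : ℝ) + 1 - p) ≠ 0 := fun h => hp ((m : ℤ) + 1) (by push_cast; linarith)
    have := Real.Gamma_add_one hq1
    rw [show (m : ℝ) + 1 - p + 1 = (((m : ℕ) + 1 : ℕ) : ℝ) + 1 - p by push_cast; ring] at this
    simpa [hqdef] using this
  -- the key rewriting of the target series terms
  have hkey : ∀ m : ℕ, Real.Gamma (p - (m : ℝ)) / (Real.Gamma p * s ^ (m + 1)) =
      Real.Gamma (1 - p) * (-1 : ℝ) ^ m / (q m * s ^ (m + 1)) := by
    intro m
    have hqm : q m = Real.Gamma ((m : ℝ) + 1 - p) := rfl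
    have hs' : s ≠ 0 := ne_of_gt hs
    have hd1 : Real.Gamma p * s ^ (m + 1) ≠ 0 := mul_ne_zero hΓp (pow_ne_zero _ hs')
    have hd2 : q m * s ^ (m + 1) ≠ 0 := mul_ne_zero (hq m) (pow_ne_zero _ hs')
    rw [div_eq_div_iff hd1 hd2, aux_gamma_id p hp m, ← hqm]
    field_simp [hq m]
    try ring
  -- the summand functions
  set g : ℕ → ℝ → ℝ := fun m w => Real.exp (-(s * w)) *
      (Real.Gamma (1 - p) * ((-1 : ℝ) ^ m * w ^ m / ((m.factorial : ℝ) * q m))) with hgdef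
  set b : ℕ → ℝ := fun m => |Real.Gamma (1 - p)| / (|q m| * s ^ (m + 1)) with hbdef
  have hbnn : ∀ m, 0 ≤ b m := by
    intro m
    apply div_nonneg (abs_nonneg _)
    positivity
  -- choose a threshold for ratio estimates
  obtain ⟨M, hM⟩ := exists_nat_gt (p + 4 / s)
  have hMlarge : ∀ m : ℕ, M ≤ m → 4 / s < (m : ℝ) + 1 - p := by
    intro m hm
    have : (M : ℝ) ≤ m := by exact_mod_cast hm
    linarith
  have hMpos : ∀ m : ℕ, M ≤ m → 0 < (m : ℝ) + 1 - p := by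
    intro m hm
    have h4 : 0 < 4 / s := by positivity
    linarith [hMlarge m hm]
  -- summability of b by ratio test
  have hb : Summable b := by
    apply summable_of_ratio_norm_eventually_le (r := 1 / 2) (by norm_num)
    filter_upwards [Filter.eventually_atTop.2 ⟨M, fun m hm => hm⟩] with m hm
    have hpos := hMpos m hm
    have hbig := hMlarge m hm
    have hrec : b (m + 1) = b m / (((m : ℝ) + 1 - p) * s) := by
      simp only [hbdef]
      rw [hqrec m, abs_mul, abs_of_pos hpos, div_div]
      congr 1
      ring
    rw [Real.norm_eq_abs, Real.norm_eq_abs, abs_of_nonneg (hbnn _), abs_of_nonneg (hbnn _), hrec]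
    have h2 : (2 : ℝ) ≤ ((m : ℝ) + 1 - p) * s := by
      have : 4 < ((m : ℝ) + 1 - p) * s := by
        rw [div_lt_iff₀ hs] at hbig
        linarith
      linarith
    calc b m / (((m : ℝ) + 1 - p) * s) ≤ b m / 2 := by gcongr
      _ = 1 / 2 * b m := by ring
  -- summability of the target series
  have hsum2 : Summable (fun m : ℕ => Real.Gamma (p - (m : ℝ)) / (Real.Gamma p * s ^ (m + 1))) := by
    apply Summable.of_norm
    refine hb.congr fun m => ?_
    rw [hkey m]
    simp only [hbdef, Real.norm_eq_abs, abs_div, abs_mul, abs_pow, abs_neg, abs_one,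
      one_pow, mul_one, abs_of_pos (pow_pos hs _)]
  -- integral of exp(-(s w)) * w^m
  have hIint : ∀ m : ℕ, IntegrableOn (fun w : ℝ => Real.exp (-(s * w)) * w ^ m) (Set.Ioi 0) := by
    intro m
    have h := integrableOn_rpow_mul_exp_neg_mul_rpow (p := 1) (s := (m : ℝ)) (b := s)
      (by have : (0:ℝ) ≤ (m:ℝ) := Nat.cast_nonneg m; linarith) zero_lt_one hs
    apply h.congr_fun _ measurableSet_Ioi
    intro x hx
    simp only [Real.rpow_natCast, Real.rpow_one, neg_mul]
    try ring
  have hIval : ∀ m : ℕ, ∫ w in Set.Ioi (0 : ℝ), Real.exp (-(s * w)) * w ^ m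
      = (m.factorial : ℝ) / s ^ (m + 1) := by
    intro m
    have h := integral_rpow_mul_exp_neg_mul_Ioi (a := (m : ℝ) + 1) (r := s) (by positivity) hs
    rw [show ∫ w in Set.Ioi (0:ℝ), Real.exp (-(s * w)) * w ^ m
        = ∫ t in Set.Ioi (0:ℝ), t ^ ((m : ℝ) + 1 - 1) * Real.exp (-(s * t)) by
      refine setIntegral_congr_fun measurableSet_Ioi fun t ht => ?_
      rw [show (m : ℝ) + 1 - 1 = (m : ℝ) by ring, Real.rpow_natCast]
      ring]
    rw [h, Real.Gamma_nat_eq_factorial m]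
    rw [show (m : ℝ) + 1 = ((m + 1 : ℕ) : ℝ) by push_cast; ring, Real.rpow_natCast]
    field_simp
    rw [← mul_pow, one_div, inv_mul_cancel₀ (ne_of_gt hs), one_pow]
  -- each g m is integrable with computable integral
  have hg_eq : ∀ m : ℕ, g m = fun w : ℝ =>
      (Real.Gamma (1 - p) * (-1 : ℝ) ^ m / ((m.factorial : ℝ) * q m)) *
        (Real.exp (-(s * w)) * w ^ m) := by
    intro m
    funext w
    simp only [hgdef]
    ring
  have hgint : ∀ m : ℕ, Integrable (g m) (volume.restrict (Set.Ioi 0)) := by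
    intro m
    rw [hg_eq m]
    exact (hIint m).const_mul _
  have hfacpos : ∀ m : ℕ, (0 : ℝ) < (m.factorial : ℝ) := by
    intro m; exact_mod_cast Nat.factorial_pos m
  have hgval : ∀ m : ℕ, ∫ w in Set.Ioi (0 : ℝ), g m w
      = Real.Gamma (1 - p) * (-1 : ℝ) ^ m / (q m * s ^ (m + 1)) := by
    intro m
    rw [hg_eq m, integral_const_mul, hIval m]
    field_simp [hq m, (hfacpos m).ne']
    try ring
  have hgnormval : ∀ m : ℕ, ∫ w in Set.Ioi (0 : ℝ), ‖g m w‖ = b m := by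
    intro m
    rw [show (fun w : ℝ => ‖g m w‖) = fun w => ‖g m w‖ from rfl]
    rw [show ∫ w in Set.Ioi (0:ℝ), ‖g m w‖
        = ∫ w in Set.Ioi (0:ℝ), (|Real.Gamma (1 - p)| / ((m.factorial : ℝ) * |q m|)) *
            (Real.exp (-(s * w)) * w ^ m) by
      refine setIntegral_congr_fun measurableSet_Ioi fun w hw => ?_
      have hw' : (0 : ℝ) < w := hw
      rw [hg_eq m]
      simp only [Real.norm_eq_abs, abs_mul, abs_div, abs_pow, abs_neg, abs_one, one_pow,
        Real.abs_exp, Nat.abs_cast, mul_one, abs_of_pos hw']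
      try ring]
    rw [integral_const_mul, hIval m]
    simp only [hbdef]
    field_simp [(hfacpos m).ne', abs_ne_zero.mpr (hq m)]
    try ring
  -- summability of integral norms
  have hbsum' : Summable (fun m : ℕ => ∫ w in Set.Ioi (0 : ℝ), ‖g m w‖) := by
    convert hb using 1
    funext m
    exact hgnormval m
  -- pointwise identity on Ioi 0
  have hpt : ∀ w ∈ Set.Ioi (0 : ℝ), Real.exp (-(s * w)) * F w = ∑' m, g m w := by
    intro w hw
    rw [hF w (le_of_lt hw)]
    simp only [hgdef, hqdef]
    rw [tsum_mul_left, tsum_mul_left]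
  -- uniform-in-m bound constant
  set u : ℕ → ℝ := fun m => (2 / s) ^ m / |q m| with hudef
  have hunn : ∀ m, 0 ≤ u m := by
    intro m
    apply div_nonneg (by positivity) (abs_nonneg _)
  have husum : Summable u := by
    apply summable_of_ratio_norm_eventually_le (r := 1 / 2) (by norm_num)
    filter_upwards [Filter.eventually_atTop.2 ⟨M, fun m hm => hm⟩] with m hm
    have hpos := hMpos m hm
    have hbig := hMlarge m hm
    have hrec : u (m + 1) = u m * ((2 / s) / ((m : ℝ) + 1 - p)) := by
      simp only [hudef]
      rw [hqrec m, abs_mul, abs_of_pos hpos, pow_succ]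
      field_simp
    rw [Real.norm_eq_abs, Real.norm_eq_abs, abs_of_nonneg (hunn _), abs_of_nonneg (hunn _), hrec]
    have hratio : (2 / s) / ((m : ℝ) + 1 - p) ≤ 1 / 2 := by
      rw [div_le_div_iff₀ hpos (by norm_num)]
      calc (2 : ℝ) / s * 2 = 4 / s := by ring
        _ ≤ 1 * ((m : ℝ) + 1 - p) := by rw [one_mul]; exact hbig.le
    calc u m * ((2 / s) / ((m : ℝ) + 1 - p)) ≤ u m * (1 / 2) :=
          mul_le_mul_of_nonneg_left hratio (hunn m)
      _ = 1 / 2 * u m := by ring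
  obtain ⟨C, hC⟩ := husum.tendsto_atTop_zero.bddAbove_range
  have hCb : ∀ m, u m ≤ C := fun m => hC (Set.mem_range_self m)
  have hC0 : 0 ≤ C := le_trans (hunn 0) (hCb 0)
  -- majorization of ‖g m w‖
  have hmaj : ∀ (w : ℝ) (m : ℕ), ‖g m w‖ ≤
      (|Real.Gamma (1 - p)| * C * Real.exp (-(s * w))) * ((s * |w| / 2) ^ m / m.factorial) := by
    intro w m
    have h1 : ‖g m w‖ = Real.exp (-(s * w)) * (|Real.Gamma (1 - p)| *
        (|w| ^ m / ((m.factorial : ℝ) * |q m|))) := by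
      simp only [hgdef, Real.norm_eq_abs, abs_mul, abs_div, abs_pow, abs_neg, abs_one,
        one_pow, Real.abs_exp, Nat.abs_cast, mul_one]
      ring
    rw [h1]
    have h2 : |w| ^ m / ((m.factorial : ℝ) * |q m|) = u m * ((s * |w| / 2) ^ m / m.factorial) := by
      simp only [hudef]
      rw [div_mul_div_comm, ← mul_pow,
        show (2 / s) * (s * |w| / 2) = |w| by field_simp]
      ring
    rw [h2]
    have h3 : u m * ((s * |w| / 2) ^ m / m.factorial) ≤ C * ((s * |w| / 2) ^ m / m.factorial) := by
      apply mul_le_mul_of_nonneg_right (hCb m)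
      positivity
    calc Real.exp (-(s * w)) * (|Real.Gamma (1 - p)| * (u m * ((s * |w| / 2) ^ m / m.factorial)))
        ≤ Real.exp (-(s * w)) * (|Real.Gamma (1 - p)| * (C * ((s * |w| / 2) ^ m / m.factorial))) := by
          apply mul_le_mul_of_nonneg_left _ (Real.exp_pos _).le
          exact mul_le_mul_of_nonneg_left h3 (abs_nonneg _)
      _ = (|Real.Gamma (1 - p)| * C * Real.exp (-(s * w))) * ((s * |w| / 2) ^ m / m.factorial) := by
          ring
  have hmajsum : ∀ w : ℝ, Summable (fun m : ℕ =>
      (|Real.Gamma (1 - p)| * C * Real.exp (-(s * w))) * ((s * |w| / 2) ^ m / m.factorial)) :=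
    fun w => (Real.summable_pow_div_factorial (s * |w| / 2)).mul_left _
  have hnormsum : ∀ w : ℝ, Summable (fun m : ℕ => ‖g m w‖) := by
    intro w
    exact (hmajsum w).of_nonneg_of_le (fun m => norm_nonneg _) (hmaj w)
  have hgsum : ∀ w : ℝ, Summable (fun m : ℕ => g m w) := fun w => (hnormsum w).of_norm
  -- measurability of the tsum
  have hgcont : ∀ m : ℕ, Continuous (g m) := by
    intro m
    simp only [hgdef]
    exact (Real.continuous_exp.comp (continuous_const.mul continuous_id).neg).mul
      (continuous_const.mul ((continuous_const.mul (continuous_pow m)).div_const _))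
  have hmeas : Measurable (fun w : ℝ => ∑' m, g m w) := by
    apply measurable_of_tendsto_metrizable
      (f := fun n : ℕ => fun w : ℝ => ∑ m ∈ Finset.range n, g m w)
    · intro n
      exact Finset.measurable_sum _ fun m _ => (hgcont m).measurable
    · rw [tendsto_pi_nhds]
      intro w
      exact (hgsum w).hasSum.tendsto_sum_nat
  -- bound on the tsum for w > 0
  have hexp_tsum : ∀ x : ℝ, ∑' m : ℕ, x ^ m / (m.factorial : ℝ) = Real.exp x := by
    intro x
    rw [Real.exp_eq_exp_ℝ, NormedSpace.exp_eq_tsum_div]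
  have hbound : ∀ w ∈ Set.Ioi (0 : ℝ), ‖∑' m, g m w‖ ≤
      (|Real.Gamma (1 - p)| * C) * Real.exp (-(s / 2) * w) := by
    intro w hw
    have hw' : (0 : ℝ) < w := hw
    calc ‖∑' m, g m w‖ ≤ ∑' m, ‖g m w‖ := norm_tsum_le_tsum_norm (hnormsum w)
      _ ≤ ∑' m : ℕ, (|Real.Gamma (1 - p)| * C * Real.exp (-(s * w))) *
            ((s * |w| / 2) ^ m / m.factorial) :=
          Summable.tsum_le_tsum (hmaj w) (hnormsum w) (hmajsum w)
      _ = (|Real.Gamma (1 - p)| * C * Real.exp (-(s * w))) * Real.exp (s * |w| / 2) := by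
          rw [tsum_mul_left, hexp_tsum]
      _ = (|Real.Gamma (1 - p)| * C) * Real.exp (-(s / 2) * w) := by
          rw [abs_of_pos hw', mul_assoc, ← Real.exp_add,
            show -(s * w) + s * w / 2 = -(s / 2) * w by ring]
  -- integrability of the tsum
  have hbint : Integrable (fun w : ℝ => (|Real.Gamma (1 - p)| * C) * Real.exp (-(s / 2) * w))
      (volume.restrict (Set.Ioi 0)) :=
    (exp_neg_integrableOn_Ioi 0 (by positivity : (0:ℝ) < s / 2)).const_mul _
  have hInt : IntegrableOn (fun w : ℝ => ∑' m, g m w) (Set.Ioi 0) := by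
    apply Integrable.mono' hbint hmeas.aestronglyMeasurable
    rw [ae_restrict_iff' measurableSet_Ioi]
    exact ae_of_all _ hbound
  have hIntF : IntegrableOn (fun w : ℝ => Real.exp (-(s * w)) * F w) (Set.Ioi 0) := by
    apply hInt.congr
    rw [Filter.EventuallyEq, ae_restrict_iff' measurableSet_Ioi]
    exact ae_of_all _ fun w hw => (hpt w hw).symm
  refine ⟨hIntF, hsum2, ?_⟩
  have e1 : ∫ w in Set.Ioi (0 : ℝ), Real.exp (-(s * w)) * F w
      = ∫ w in Set.Ioi (0 : ℝ), ∑' m, g m w :=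
    setIntegral_congr_fun measurableSet_Ioi fun w hw => hpt w hw
  have e2 : ∫ w in Set.Ioi (0 : ℝ), ∑' m, g m w = ∑' m, ∫ w in Set.Ioi (0 : ℝ), g m w :=
    (integral_tsum_of_summable_integral_norm hgint hbsum').symm
  rw [e1, e2]
  exact tsum_congr fun m => by rw [hgval m, hkey m]
end

section
/- Let p be a real number that is not a nonnegative integer, let n, v, c be real numbers with n ≠ 0, v > 0, c ≠ 0, and let a, b be real numbers. Define F(w) = a·∑_{m=0}^∞ (-1)^m·n^(2m)·w^(2m-p)/Γ(2m+1-p) + b·∑_{m=0}^∞ (-1)^m·n^(2m+1)·w^(2m+1-p)/Γ(2m+2-p) for w > 0, and set G(t) = F(v·t^c) for t > 0. Then G is twice differentiable on (0,∞) and satisfies G''(t) + ((1-c)/t)·G'(t) + (n·c·v)²·t^(2c-2)·G(t) = c²·(-a·(1+p) + b·n·v·t^c)/(Γ(-p)·v^p·t^(2+c·p)) for all t > 0. -/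
open Real Filter


private lemma gamma_inv_step (x : ℝ) :
    1 / Real.Gamma x = x * (x + 1) / Real.Gamma (x + 2) := by
  by_cases h : ∀ m : ℕ, x ≠ -m
  · have h0 : x ≠ 0 := by simpa using h 0
    have h1 : x + 1 ≠ 0 := by
      have := h 1
      intro hx
      apply this
      push_cast
      linarith
    have hΓ : Real.Gamma x ≠ 0 := Real.Gamma_ne_zero h
    have e1 : Real.Gamma (x + 1) = x * Real.Gamma x := Real.Gamma_add_one h0
    have e2 : Real.Gamma (x + 2) = (x + 1) * Real.Gamma (x + 1) := by
      rw [show x + 2 = (x + 1) + 1 by ring, Real.Gamma_add_one h1]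
    rw [e2, e1]
    field_simp
  · push_neg at h
    obtain ⟨m, hm⟩ := h
    subst hm
    match m with
    | 0 => norm_num [Real.Gamma_zero]
    | 1 =>
      have l1 : Real.Gamma (-(1:ℕ):ℝ) = 0 := Real.Gamma_neg_nat_eq_zero 1
      push_cast at l1 ⊢
      rw [l1]
      norm_num
    | (k+2) =>
      have l1 : Real.Gamma (-((k+2:ℕ):ℝ)) = 0 := Real.Gamma_neg_nat_eq_zero (k+2)
      have l2 : Real.Gamma (-((k+2:ℕ):ℝ) + 2) = 0 := by
        rw [show -((k+2:ℕ):ℝ) + 2 = -(k:ℕ) by push_cast; ring]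
        exact Real.Gamma_neg_nat_eq_zero k
      rw [l1, l2]
      simp


private lemma summable_master_pos (β : ℝ) (d : ℕ) {r : ℝ} (hrpos : 0 < r) :
    Summable (fun m : ℕ => ((m:ℝ) + 1) ^ d * r ^ m / |Real.Gamma (2 * m + β)|) := by
  have hr : 0 ≤ r := hrpos.le
  · apply summable_of_ratio_norm_eventually_le (r := 1/2) (by norm_num)
    have htend : Tendsto (fun m : ℕ => 2 * (m:ℝ) + β) atTop atTop := by
      apply tendsto_atTop_add_const_right
      exact (tendsto_natCast_atTop_atTop).const_mul_atTop (by norm_num)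
    filter_upwards [htend.eventually_ge_atTop (max 1 (2^(d+1) * r))] with m hm
    have hg1 : 1 ≤ 2 * (m:ℝ) + β := le_trans (le_max_left _ _) hm
    have hgr : 2^(d+1) * r ≤ 2 * (m:ℝ) + β := le_trans (le_max_right _ _) hm
    have hg0 : (0:ℝ) < 2 * (m:ℝ) + β := by linarith
    have hΓg : 0 < Real.Gamma (2 * (m:ℝ) + β) := Real.Gamma_pos_of_pos hg0
    have hnm : (2 * ((m+1 : ℕ):ℝ) + β) = (2 * (m:ℝ) + β) + 2 := by push_cast; ring
    have e2 : Real.Gamma ((2 * (m:ℝ) + β) + 2)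
        = ((2 * (m:ℝ) + β) + 1) * ((2 * (m:ℝ) + β) * Real.Gamma (2 * (m:ℝ) + β)) := by
      rw [show (2 * (m:ℝ) + β) + 2 = ((2 * (m:ℝ) + β) + 1) + 1 by ring,
        Real.Gamma_add_one (by linarith), Real.Gamma_add_one (by linarith)]
    have hΓg2 : 0 < ((2 * (m:ℝ) + β) + 1) * ((2 * (m:ℝ) + β) * Real.Gamma (2 * (m:ℝ) + β)) :=
      mul_pos (by linarith) (mul_pos hg0 hΓg)
    rw [Real.norm_eq_abs, Real.norm_eq_abs, hnm, e2, abs_div, abs_div, abs_abs, abs_abs,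
      abs_of_pos hΓg2, abs_of_pos hΓg]
    have habs1 : |(((m+1:ℕ):ℝ) + 1) ^ d * r ^ (m + 1)| = ((m:ℝ)+2) ^ d * r ^ (m+1) := by
      rw [abs_of_pos (by positivity)]; push_cast; ring
    have habs2 : |((m:ℝ) + 1) ^ d * r ^ m| = ((m:ℝ)+1)^d * r^m := abs_of_pos (by positivity)
    rw [habs1, habs2, ← mul_div_assoc, div_le_div_iff₀ hΓg2 hΓg]
    -- key scalar inequality
    have h1 : ((m:ℝ)+2)^d ≤ 2^d * ((m:ℝ)+1)^d := by
      rw [← mul_pow]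
      apply pow_le_pow_left₀ (by positivity) (by linarith)
    have hga : 2*(2^(d+1)*r) ≤ (2*(m:ℝ)+β)*((2*(m:ℝ)+β)+1) := by
      nlinarith [mul_nonneg (show (0:ℝ) ≤ 2*(m:ℝ)+β by linarith)
        (show (0:ℝ) ≤ 2*(m:ℝ)+β-1 by linarith), hgr]
    have h3 : (2:ℝ)^d * r ≤ 1/2*((2*(m:ℝ)+β)*((2*(m:ℝ)+β)+1)) := by
      nlinarith [hga, pow_succ (2:ℝ) d, mul_nonneg (pow_nonneg (by norm_num : (0:ℝ) ≤ 2) d) hrpos.le]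
    have key : ((m:ℝ)+2)^d * r ≤ 1/2 * (((m:ℝ)+1)^d * ((2*(m:ℝ)+β) * ((2*(m:ℝ)+β)+1))) := by
      calc ((m:ℝ)+2)^d * r ≤ (2^d * ((m:ℝ)+1)^d) * r := mul_le_mul_of_nonneg_right h1 hr
        _ = ((m:ℝ)+1)^d * (2^d * r) := by ring
        _ ≤ ((m:ℝ)+1)^d * (1/2*((2*(m:ℝ)+β)*((2*(m:ℝ)+β)+1))) :=
            mul_le_mul_of_nonneg_left h3 (by positivity)
        _ = _ := by ring
    calc ((m:ℝ)+2)^d * r^(m+1) * Real.Gamma (2*(m:ℝ)+β)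
        = (((m:ℝ)+2)^d * r) * (r^m * Real.Gamma (2*(m:ℝ)+β)) := by ring
      _ ≤ (1/2 * (((m:ℝ)+1)^d * ((2*(m:ℝ)+β) * ((2*(m:ℝ)+β)+1)))) * (r^m * Real.Gamma (2*(m:ℝ)+β)) :=
          mul_le_mul_of_nonneg_right key (by positivity)
      _ = 1/2 * (((m:ℝ)+1)^d * r^m) * ((2*(m:ℝ)+β+1) * ((2*(m:ℝ)+β) * Real.Gamma (2*(m:ℝ)+β))) := by ring

private lemma summable_master (β : ℝ) (d : ℕ) {r : ℝ} (hr : 0 ≤ r) :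
    Summable (fun m : ℕ => ((m:ℝ) + 1) ^ d * r ^ m / |Real.Gamma (2 * m + β)|) := by
  rcases hr.eq_or_lt with h0 | hrpos
  · subst h0
    apply Summable.of_nonneg_of_le (fun m => by positivity) (fun m => ?_)
      (summable_master_pos β d one_pos)
    gcongr
    exact zero_le_one
  · exact summable_master_pos β d hrpos

private def Bnd (c : ℕ → ℝ) (A β r0 : ℝ) (d : ℕ) : Prop :=
  ∀ m : ℕ, |c m| ≤ A * ((m:ℝ) + 1) ^ d * r0 ^ m / |Real.Gamma (2 * m + β)|

private lemma Bnd.nonneg_bound {c : ℕ → ℝ} {A β r0 : ℝ} {d : ℕ} (hc : Bnd c A β r0 d) (m : ℕ) :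
    0 ≤ A * ((m:ℝ) + 1) ^ d * r0 ^ m / |Real.Gamma (2 * m + β)| :=
  le_trans (abs_nonneg _) (hc m)

private lemma Bnd.mulk {c : ℕ → ℝ} {A β r0 : ℝ} {d : ℕ} (hc : Bnd c A β r0 d)
    (k : ℕ → ℕ) (hk : ∀ m, k m ≤ 2 * m + 2) :
    Bnd (fun m => c m * (k m : ℝ)) (2 * A) β r0 (d + 1) := by
  intro m
  have h1 : |c m * (k m : ℝ)| = |c m| * (k m : ℝ) := by
    rw [abs_mul, abs_of_nonneg (by positivity : (0:ℝ) ≤ (k m : ℝ))]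
  rw [h1]
  have h2 : ((k m : ℝ)) ≤ 2 * (m:ℝ) + 2 := by exact_mod_cast hk m
  calc |c m| * (k m : ℝ)
      ≤ (A * ((m:ℝ) + 1) ^ d * r0 ^ m / |Real.Gamma (2 * m + β)|) * (2 * (m:ℝ) + 2) :=
        mul_le_mul (hc m) h2 (by positivity) (hc.nonneg_bound m)
    _ = 2 * A * ((m:ℝ) + 1) ^ (d+1) * r0 ^ m / |Real.Gamma (2 * m + β)| := by
        rw [pow_succ]; ring

private lemma Bnd.summable_pow {c : ℕ → ℝ} {A β r0 : ℝ} {d : ℕ} (hc : Bnd c A β r0 d)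
    (hr0 : 0 ≤ r0) (k : ℕ → ℕ) (hk : ∀ m, k m ≤ 2 * m + 2) (x : ℝ) :
    Summable (fun m => c m * x ^ (k m)) := by
  set R := max 1 |x| with hR
  have hR1 : (1:ℝ) ≤ R := le_max_left _ _
  have hR0 : (0:ℝ) ≤ R := by linarith
  have hxR : |x| ≤ R := le_max_right _ _
  apply Summable.of_norm_bounded
    (g := fun m : ℕ => (A * R^2) * (((m:ℝ)+1)^d * (r0*R^2)^m / |Real.Gamma (2*m+β)|))
    (((summable_master β d (by positivity)).mul_left _))
  intro m
  have h1 : ‖c m * x ^ k m‖ = |c m| * |x| ^ (k m) := by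
    rw [Real.norm_eq_abs, abs_mul, abs_pow]
  have h2 : |x| ^ (k m) ≤ R ^ (2*m+2) := by
    calc |x| ^ (k m) ≤ R ^ (k m) := pow_le_pow_left₀ (abs_nonneg x) hxR _
      _ ≤ R ^ (2*m+2) := pow_le_pow_right₀ hR1 (hk m)
  rw [h1]
  calc |c m| * |x| ^ (k m)
      ≤ (A * ((m:ℝ) + 1) ^ d * r0 ^ m / |Real.Gamma (2 * m + β)|) * R ^ (2*m+2) :=
        mul_le_mul (hc m) h2 (by positivity) (hc.nonneg_bound m)
    _ = (A * R^2) * (((m:ℝ)+1)^d * (r0*R^2)^m / |Real.Gamma (2*m+β)|) := by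
        rw [mul_pow, ← pow_mul, pow_add]; ring

private lemma Bnd.hasDerivAt {c : ℕ → ℝ} {A β r0 : ℝ} {d : ℕ} (hc : Bnd c A β r0 d)
    (hr0 : 0 ≤ r0) (k : ℕ → ℕ) (hk : ∀ m, k m ≤ 2 * m + 2) (x : ℝ) :
    HasDerivAt (fun y => ∑' m, c m * y ^ (k m))
      (∑' m, c m * (k m : ℝ) * x ^ (k m - 1)) x := by
  set R := |x| + 1 with hRdef
  have hR1 : (1:ℝ) ≤ R := by have := abs_nonneg x; linarith
  have hR0 : (0:ℝ) ≤ R := by linarith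
  have hsum : Summable (fun m : ℕ => (2*A*R^2) * (((m:ℝ)+1)^(d+1) * (r0*R^2)^m / |Real.Gamma (2*m+β)|)) :=
    (summable_master β (d+1) (by positivity)).mul_left _
  have hu : Summable (fun m => |c m| * (2*(m:ℝ)+2) * R ^ (2*m+2)) := by
    refine Summable.of_nonneg_of_le (fun m => by positivity) (fun m => ?_) hsum
    calc |c m| * (2*(m:ℝ)+2) * R ^ (2*m+2)
        ≤ (A * ((m:ℝ) + 1) ^ d * r0 ^ m / |Real.Gamma (2 * m + β)|) * (2*(m:ℝ)+2) * R ^ (2*m+2) := by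
          apply mul_le_mul_of_nonneg_right _ (by positivity)
          exact mul_le_mul_of_nonneg_right (hc m) (by positivity)
      _ = (2*A*R^2) * (((m:ℝ)+1)^(d+1) * (r0*R^2)^m / |Real.Gamma (2*m+β)|) := by
          rw [mul_pow, ← pow_mul, pow_add, pow_succ]; ring
  have hmem : x ∈ Metric.ball (0:ℝ) R := by
    simp [Real.dist_eq, hRdef]
  apply hasDerivAt_tsum_of_isPreconnected hu Metric.isOpen_ball
    (convex_ball (0:ℝ) R).isPreconnected
    (g := fun m y => c m * y ^ (k m)) ?_ ?_ hmem ?_ hmem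
  · intro m y _
    have := (hasDerivAt_pow (k m) y).const_mul (c m)
    exact this.congr_deriv (by ring)
  · intro m y hy
    have hyR : |y| ≤ R := by
      have := Metric.mem_ball.mp hy
      rw [Real.dist_eq, sub_zero] at this
      linarith
    rw [Real.norm_eq_abs, abs_mul, abs_mul, abs_pow]
    have e1 : |c m| * |(k m : ℝ)| ≤ |c m| * (2*(m:ℝ)+2) := by
      apply mul_le_mul_of_nonneg_left _ (abs_nonneg _)
      rw [abs_of_nonneg (by positivity : (0:ℝ) ≤ (k m:ℝ))]
      exact_mod_cast hk m
    have e2 : |y| ^ (k m - 1) ≤ R ^ (2*m+2) := by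
      calc |y| ^ (k m - 1) ≤ R ^ (k m - 1) := pow_le_pow_left₀ (abs_nonneg y) hyR _
        _ ≤ R ^ (2*m+2) := pow_le_pow_right₀ hR1 (le_trans (Nat.sub_le _ _) (hk m))
    calc |c m| * |(k m:ℝ)| * |y| ^ (k m - 1)
        ≤ (|c m| * (2*(m:ℝ)+2)) * R ^ (2*m+2) :=
          mul_le_mul e1 e2 (by positivity) (by positivity)
      _ = |c m| * (2*(m:ℝ)+2) * R ^ (2*m+2) := by ring
  · exact hc.summable_pow hr0 k hk x

-- coefficients
private noncomputable def c0 (p n : ℝ) (m : ℕ) : ℝ :=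
  (-1)^m * n^(2*m) / Real.Gamma (2*m+1-p)
private noncomputable def c1 (p n : ℝ) (m : ℕ) : ℝ :=
  (-1)^m * n^(2*m+1) / Real.Gamma (2*m+2-p)
private noncomputable def cu0 (p n : ℝ) (m : ℕ) : ℝ :=
  (-1)^m * n^(2*m) / Real.Gamma (2*m-1-p)
private noncomputable def cu1 (p n : ℝ) (m : ℕ) : ℝ :=
  (-1)^m * n^(2*m+1) / Real.Gamma (2*m-p)

private lemma abs_coeff (n : ℝ) (m : ℕ) : |(-1:ℝ)^m * n^(2*m)| = (n^2)^m := by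
  rw [abs_mul, abs_pow, abs_pow, abs_neg, abs_one, one_pow, one_mul, pow_mul, sq_abs]

private lemma bnd_c0 (p n : ℝ) : Bnd (c0 p n) 1 (1-p) (n^2) 0 := by
  intro m
  rw [show (2*(m:ℝ) + (1-p)) = 2*m+1-p by ring, c0, abs_div, abs_coeff]
  simp

private lemma bnd_c1 (p n : ℝ) : Bnd (c1 p n) |n| (2-p) (n^2) 0 := by
  intro m
  rw [show (2*(m:ℝ) + (2-p)) = 2*m+2-p by ring, c1, abs_div]
  have h : |(-1:ℝ)^m * n^(2*m+1)| = |n| * (n^2)^m := by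
    rw [pow_succ, ← mul_assoc, abs_mul, abs_coeff, mul_comm]
  rw [h]
  simp

private lemma bnd_cu0 (p n : ℝ) : Bnd (cu0 p n) 1 (-1-p) (n^2) 0 := by
  intro m
  rw [show (2*(m:ℝ) + (-1-p)) = 2*m-1-p by ring, cu0, abs_div, abs_coeff]
  simp

private lemma bnd_cu1 (p n : ℝ) : Bnd (cu1 p n) |n| (-p) (n^2) 0 := by
  intro m
  rw [show (2*(m:ℝ) + (-p)) = 2*m-p by ring, cu1, abs_div]
  have h : |(-1:ℝ)^m * n^(2*m+1)| = |n| * (n^2)^m := by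
    rw [pow_succ, ← mul_assoc, abs_mul, abs_coeff, mul_comm]
  rw [h]
  simp

-- series
private noncomputable def s0 (p n : ℝ) (x : ℝ) : ℝ := ∑' m, c0 p n m * x ^ (2*m)
private noncomputable def s0d (p n : ℝ) (x : ℝ) : ℝ :=
  ∑' m, c0 p n m * ((2*m : ℕ) : ℝ) * x ^ (2*m - 1)
private noncomputable def s0dd (p n : ℝ) (x : ℝ) : ℝ :=
  ∑' m, c0 p n m * ((2*m : ℕ) : ℝ) * ((2*m - 1 : ℕ) : ℝ) * x ^ (2*m - 1 - 1)
private noncomputable def s1 (p n : ℝ) (x : ℝ) : ℝ := ∑' m, c1 p n m * x ^ (2*m+1)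
private noncomputable def s1d (p n : ℝ) (x : ℝ) : ℝ :=
  ∑' m, c1 p n m * ((2*m+1 : ℕ) : ℝ) * x ^ (2*m+1 - 1)
private noncomputable def s1dd (p n : ℝ) (x : ℝ) : ℝ :=
  ∑' m, c1 p n m * ((2*m+1 : ℕ) : ℝ) * ((2*m+1 - 1 : ℕ) : ℝ) * x ^ (2*m+1 - 1 - 1)

private lemma hasDerivAt_s0 (p n x : ℝ) : HasDerivAt (s0 p n) (s0d p n x) x :=
  (bnd_c0 p n).hasDerivAt (sq_nonneg n) (fun m => 2*m) (fun m => by show 2*m ≤ 2*m+2; omega) x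

private lemma hasDerivAt_s0d (p n x : ℝ) : HasDerivAt (s0d p n) (s0dd p n x) x :=
  ((bnd_c0 p n).mulk (fun m => 2*m) (fun m => by show 2*m ≤ 2*m+2; omega)).hasDerivAt (sq_nonneg n)
    (fun m => 2*m - 1) (fun m => by show 2*m-1 ≤ 2*m+2; omega) x

private lemma hasDerivAt_s1 (p n x : ℝ) : HasDerivAt (s1 p n) (s1d p n x) x :=
  (bnd_c1 p n).hasDerivAt (sq_nonneg n) (fun m => 2*m+1) (fun m => by show 2*m+1 ≤ 2*m+2; omega) x

private lemma hasDerivAt_s1d (p n x : ℝ) : HasDerivAt (s1d p n) (s1dd p n x) x :=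
  ((bnd_c1 p n).mulk (fun m => 2*m+1) (fun m => by show 2*m+1 ≤ 2*m+2; omega)).hasDerivAt (sq_nonneg n)
    (fun m => 2*m+1 - 1) (fun m => by show 2*m+1-1 ≤ 2*m+2; omega) x

private lemma hΓne (p : ℝ) (hp : ∀ k : ℕ, p ≠ (k:ℝ)) (j : ℕ) (r : ℕ) :
    Real.Gamma (2*(j:ℝ) + r - p) ≠ 0 := by
  apply Real.Gamma_ne_zero
  intro k hk
  apply hp (2*j + r + k)
  push_cast at hk ⊢
  linarith

private lemma I0 (p n : ℝ) (hp : ∀ k : ℕ, p ≠ (k:ℝ)) (w : ℝ) :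
    p*(p+1) * s0 p n w - 2*p*(w * s0d p n w) + w^2 * s0dd p n w + n^2*(w^2 * s0 p n w)
      = -(1+p)/Real.Gamma (-p) := by
  have hp0 : -p ≠ 0 := by
    intro h; exact hp 0 (by push_cast; linarith)
  have hΓp : Real.Gamma (-p) ≠ 0 := by
    apply Real.Gamma_ne_zero; intro k hk; exact hp k (by push_cast at hk ⊢; linarith)
  -- summability
  have hS : Summable (fun m => c0 p n m * w ^ (2*m)) :=
    (bnd_c0 p n).summable_pow (sq_nonneg n) (fun m => 2*m) (fun m => by show 2*m ≤ 2*m+2; omega) w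
  have hSd : Summable (fun m => c0 p n m * ((2*m : ℕ):ℝ) * w ^ (2*m-1)) :=
    ((bnd_c0 p n).mulk (fun m => 2*m) (fun m => by show 2*m ≤ 2*m+2; omega)).summable_pow
      (sq_nonneg n) (fun m => 2*m-1) (fun m => by show 2*m-1 ≤ 2*m+2; omega) w
  have hSdd : Summable (fun m => c0 p n m * ((2*m : ℕ):ℝ) * ((2*m-1 : ℕ):ℝ) * w ^ (2*m-1-1)) :=
    (((bnd_c0 p n).mulk (fun m => 2*m) (fun m => by show 2*m ≤ 2*m+2; omega)).mulk
      (fun m => 2*m-1) (fun m => by show 2*m-1 ≤ 2*m+2; omega)).summable_pow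
      (sq_nonneg n) (fun m => 2*m-1-1) (fun m => by show 2*m-1-1 ≤ 2*m+2; omega) w
  have hSu : Summable (fun m => cu0 p n m * w ^ (2*m)) :=
    (bnd_cu0 p n).summable_pow (sq_nonneg n) (fun m => 2*m) (fun m => by show 2*m ≤ 2*m+2; omega) w
  -- combine LHS into a single tsum
  have step1 : p*(p+1) * s0 p n w - 2*p*(w * s0d p n w) + w^2 * s0dd p n w + n^2*(w^2 * s0 p n w)
      = ∑' m, (p*(p+1) * (c0 p n m * w ^ (2*m))
          - 2*p*(w * (c0 p n m * ((2*m : ℕ):ℝ) * w ^ (2*m-1)))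
          + w^2 * (c0 p n m * ((2*m : ℕ):ℝ) * ((2*m-1 : ℕ):ℝ) * w ^ (2*m-1-1))
          + n^2*(w^2 * (c0 p n m * w ^ (2*m)))) := by
    rw [Summable.tsum_add (((hS.mul_left _).sub ((hSd.mul_left w).mul_left (2*p))).add (hSdd.mul_left (w^2)))
      ((hS.mul_left (w^2)).mul_left (n^2)),
      Summable.tsum_add ((hS.mul_left _).sub ((hSd.mul_left w).mul_left (2*p))) (hSdd.mul_left (w^2)),
      Summable.tsum_sub (hS.mul_left _) ((hSd.mul_left w).mul_left (2*p)),
      tsum_mul_left, tsum_mul_left, tsum_mul_left, tsum_mul_left, tsum_mul_left, tsum_mul_left]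
    simp only [s0, s0d, s0dd]
  rw [step1]
  -- telescoping
  have step2 : ∀ m : ℕ, (p*(p+1) * (c0 p n m * w ^ (2*m))
          - 2*p*(w * (c0 p n m * ((2*m : ℕ):ℝ) * w ^ (2*m-1)))
          + w^2 * (c0 p n m * ((2*m : ℕ):ℝ) * ((2*m-1 : ℕ):ℝ) * w ^ (2*m-1-1))
          + n^2*(w^2 * (c0 p n m * w ^ (2*m))))
      = cu0 p n m * w ^ (2*m) - cu0 p n (m+1) * w ^ (2*(m+1)) := by
    intro m
    match m with
    | 0 =>
      simp only [c0, cu0]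
      norm_num
      have h0 : 1 / Real.Gamma (-1-p) = p*(p+1) / Real.Gamma (1-p) := by
        have h := gamma_inv_step (-1-p)
        rw [show (-1-p+1 : ℝ) = -p by ring, show (-1-p+2 : ℝ) = 1-p by ring] at h
        rw [h, show ((-1-p)*(-p) : ℝ) = p*(p+1) by ring]
      rw [inv_eq_one_div (Real.Gamma (-1-p)), h0]
      ring
    | (j+1) =>
      have hG1 : Real.Gamma (2*(j:ℝ)+1-p) ≠ 0 := by
        have h := hΓne p hp j 1; push_cast at h; exact h
      have hG1' : (2*(j:ℝ)+1-p) ≠ 0 := by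
        intro h; exact hp (2*j+1) (by push_cast; linarith)
      have hG2' : (2*(j:ℝ)+2-p) ≠ 0 := by
        intro h; exact hp (2*j+2) (by push_cast; linarith)
      have e1 : Real.Gamma (2*(j:ℝ)+2-p) = (2*(j:ℝ)+1-p) * Real.Gamma (2*(j:ℝ)+1-p) := by
        rw [show (2*(j:ℝ)+2-p) = (2*(j:ℝ)+1-p)+1 by ring, Real.Gamma_add_one hG1']
      have e2 : Real.Gamma (2*(j:ℝ)+3-p)
          = (2*(j:ℝ)+2-p) * ((2*(j:ℝ)+1-p) * Real.Gamma (2*(j:ℝ)+1-p)) := by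
        rw [show (2*(j:ℝ)+3-p) = (2*(j:ℝ)+2-p)+1 by ring, Real.Gamma_add_one hG2', e1]
      simp only [c0, cu0]
      rw [show 2*(j+1) = 2*j+2 by omega, show 2*j+2-1 = 2*j+1 by omega,
        show 2*j+1-1 = 2*j by omega, show 2*(j+1+1) = 2*j+4 by omega]
      push_cast
      rw [show (2*((j:ℝ)+1)+1-p) = 2*(j:ℝ)+3-p by ring,
        show (2*((j:ℝ)+1)-1-p) = 2*(j:ℝ)+1-p by ring,
        show (2*((j:ℝ)+1+1)-1-p) = 2*(j:ℝ)+3-p by ring, e2]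
      generalize Real.Gamma (2*(j:ℝ)+1-p) = Γ at hG1 ⊢
      field_simp
      ring_nf
      have hA : (2 - p + (j:ℝ)*2) ≠ 0 := by contrapose! hG2'; linarith
      field_simp
      ring
  rw [tsum_congr step2, Summable.tsum_sub hSu ((summable_nat_add_iff 1).2 hSu),
    Summable.tsum_eq_zero_add hSu]
  have h0 : (1:ℝ) / Real.Gamma (-1-p) = p*(p+1) / Real.Gamma (1-p) := by
    have h := gamma_inv_step (-1-p)
    rw [show (-1-p+1 : ℝ) = -p by ring, show (-1-p+2 : ℝ) = 1-p by ring] at h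
    rw [h, show ((-1-p)*(-p) : ℝ) = p*(p+1) by ring]
  have hval : cu0 p n 0 * w ^ (2*0) = -(1+p)/Real.Gamma (-p) := by
    simp only [cu0]
    norm_num
    rw [inv_eq_one_div (Real.Gamma (-1-p)), h0, show (1-p:ℝ) = -p+1 by ring,
      Real.Gamma_add_one hp0]
    rw [div_eq_div_iff (mul_ne_zero hp0 hΓp) hΓp]
    ring
  rw [hval]
  ring

private lemma I1 (p n : ℝ) (hp : ∀ k : ℕ, p ≠ (k:ℝ)) (w : ℝ) :
    p*(p+1) * s1 p n w - 2*p*(w * s1d p n w) + w^2 * s1dd p n w + n^2*(w^2 * s1 p n w)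
      = n*w/Real.Gamma (-p) := by
  have hp0 : -p ≠ 0 := by
    intro h; exact hp 0 (by push_cast; linarith)
  have hp1 : (1:ℝ)-p ≠ 0 := by
    intro h; exact hp 1 (by push_cast; linarith)
  have hΓp : Real.Gamma (-p) ≠ 0 := by
    apply Real.Gamma_ne_zero; intro k hk; exact hp k (by push_cast at hk; linarith)
  have hS : Summable (fun m => c1 p n m * w ^ (2*m+1)) :=
    (bnd_c1 p n).summable_pow (sq_nonneg n) (fun m => 2*m+1) (fun m => by show 2*m+1 ≤ 2*m+2; omega) w
  have hSd : Summable (fun m => c1 p n m * ((2*m+1 : ℕ):ℝ) * w ^ (2*m+1-1)) :=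
    ((bnd_c1 p n).mulk (fun m => 2*m+1) (fun m => by show 2*m+1 ≤ 2*m+2; omega)).summable_pow
      (sq_nonneg n) (fun m => 2*m+1-1) (fun m => by show 2*m+1-1 ≤ 2*m+2; omega) w
  have hSdd : Summable (fun m => c1 p n m * ((2*m+1 : ℕ):ℝ) * ((2*m+1-1 : ℕ):ℝ) * w ^ (2*m+1-1-1)) :=
    (((bnd_c1 p n).mulk (fun m => 2*m+1) (fun m => by show 2*m+1 ≤ 2*m+2; omega)).mulk
      (fun m => 2*m+1-1) (fun m => by show 2*m+1-1 ≤ 2*m+2; omega)).summable_pow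
      (sq_nonneg n) (fun m => 2*m+1-1-1) (fun m => by show 2*m+1-1-1 ≤ 2*m+2; omega) w
  have hSu : Summable (fun m => cu1 p n m * w ^ (2*m+1)) :=
    (bnd_cu1 p n).summable_pow (sq_nonneg n) (fun m => 2*m+1) (fun m => by show 2*m+1 ≤ 2*m+2; omega) w
  have step1 : p*(p+1) * s1 p n w - 2*p*(w * s1d p n w) + w^2 * s1dd p n w + n^2*(w^2 * s1 p n w)
      = ∑' m, (p*(p+1) * (c1 p n m * w ^ (2*m+1))
          - 2*p*(w * (c1 p n m * ((2*m+1 : ℕ):ℝ) * w ^ (2*m+1-1)))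
          + w^2 * (c1 p n m * ((2*m+1 : ℕ):ℝ) * ((2*m+1-1 : ℕ):ℝ) * w ^ (2*m+1-1-1))
          + n^2*(w^2 * (c1 p n m * w ^ (2*m+1)))) := by
    rw [Summable.tsum_add (((hS.mul_left _).sub ((hSd.mul_left w).mul_left (2*p))).add (hSdd.mul_left (w^2)))
      ((hS.mul_left (w^2)).mul_left (n^2)),
      Summable.tsum_add ((hS.mul_left _).sub ((hSd.mul_left w).mul_left (2*p))) (hSdd.mul_left (w^2)),
      Summable.tsum_sub (hS.mul_left _) ((hSd.mul_left w).mul_left (2*p)),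
      tsum_mul_left, tsum_mul_left, tsum_mul_left, tsum_mul_left, tsum_mul_left, tsum_mul_left]
    simp only [s1, s1d, s1dd]
  rw [step1]
  have step2 : ∀ m : ℕ, (p*(p+1) * (c1 p n m * w ^ (2*m+1))
          - 2*p*(w * (c1 p n m * ((2*m+1 : ℕ):ℝ) * w ^ (2*m+1-1)))
          + w^2 * (c1 p n m * ((2*m+1 : ℕ):ℝ) * ((2*m+1-1 : ℕ):ℝ) * w ^ (2*m+1-1-1))
          + n^2*(w^2 * (c1 p n m * w ^ (2*m+1))))
      = cu1 p n m * w ^ (2*m+1) - cu1 p n (m+1) * w ^ (2*(m+1)+1) := by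
    intro m
    match m with
    | 0 =>
      have hG2 : Real.Gamma (2-p) = (1-p) * ((-p) * Real.Gamma (-p)) := by
        rw [show (2-p:ℝ) = (1-p)+1 by ring, Real.Gamma_add_one hp1,
          show (1-p:ℝ) = -p+1 by ring, Real.Gamma_add_one hp0]
      simp only [c1, cu1]
      norm_num
      have hD : ((1 - p) * (-p * Real.Gamma (-p))) ≠ 0 :=
        mul_ne_zero hp1 (mul_ne_zero hp0 hΓp)
      have key : n / Real.Gamma (2-p) * (p*(p+1) - 2*p) = n / Real.Gamma (-p) := by
        rw [hG2, div_mul_eq_mul_div, div_eq_div_iff hD hΓp]; ring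
      linear_combination w * key
    | (j+1) =>
      have hG1 : Real.Gamma (2*(j:ℝ)+2-p) ≠ 0 := by
        have h := hΓne p hp j 2; push_cast at h; exact h
      have hG2' : (2*(j:ℝ)+2-p) ≠ 0 := by
        intro h; exact hp (2*j+2) (by push_cast; linarith)
      have hG3' : (2*(j:ℝ)+3-p) ≠ 0 := by
        intro h; exact hp (2*j+3) (by push_cast; linarith)
      have e1 : Real.Gamma (2*(j:ℝ)+3-p) = (2*(j:ℝ)+2-p) * Real.Gamma (2*(j:ℝ)+2-p) := by
        rw [show (2*(j:ℝ)+3-p) = (2*(j:ℝ)+2-p)+1 by ring, Real.Gamma_add_one hG2']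
      have e2 : Real.Gamma (2*(j:ℝ)+4-p)
          = (2*(j:ℝ)+3-p) * ((2*(j:ℝ)+2-p) * Real.Gamma (2*(j:ℝ)+2-p)) := by
        rw [show (2*(j:ℝ)+4-p) = (2*(j:ℝ)+3-p)+1 by ring, Real.Gamma_add_one hG3', e1]
      simp only [c1, cu1]
      rw [show 2*(j+1)+1 = 2*j+3 by omega, show 2*j+3-1 = 2*j+2 by omega,
        show 2*j+2-1 = 2*j+1 by omega, show 2*(j+1+1)+1 = 2*j+5 by omega]
      push_cast
      rw [show (2*((j:ℝ)+1)+2-p) = 2*(j:ℝ)+4-p by ring,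
        show (2*((j:ℝ)+1)-p) = 2*(j:ℝ)+2-p by ring,
        show (2*((j:ℝ)+1+1)-p) = 2*(j:ℝ)+4-p by ring, e2]
      generalize Real.Gamma (2*(j:ℝ)+2-p) = Γ at hG1 ⊢
      field_simp
      ring_nf
      have hA : (2 - p + (j:ℝ)*2) ≠ 0 := by contrapose! hG2'; linarith
      have hB : (3 - p + (j:ℝ)*2) ≠ 0 := by contrapose! hG3'; linarith
      field_simp
      ring
  rw [tsum_congr step2, Summable.tsum_sub hSu ((summable_nat_add_iff 1).2 hSu),
    Summable.tsum_eq_zero_add hSu]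
  have hval : cu1 p n 0 * w ^ (2*0+1) = n*w/Real.Gamma (-p) := by
    simp only [cu1]
    norm_num
    ring
  rw [hval]
  ring

private noncomputable def Phi (p n a b : ℝ) (w : ℝ) : ℝ :=
  a * (w ^ (-p) * s0 p n w) + b * (w ^ (-p) * s1 p n w)

private noncomputable def Phid (p n a b : ℝ) (w : ℝ) : ℝ :=
  a * (-p * w ^ (-p - 1) * s0 p n w + w ^ (-p) * s0d p n w)
  + b * (-p * w ^ (-p - 1) * s1 p n w + w ^ (-p) * s1d p n w)

private noncomputable def Phidd (p n a b : ℝ) (w : ℝ) : ℝ :=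
  a * (p*(p+1) * w ^ (-p - 2) * s0 p n w + 2 * (-p * w ^ (-p - 1)) * s0d p n w
      + w ^ (-p) * s0dd p n w)
  + b * (p*(p+1) * w ^ (-p - 2) * s1 p n w + 2 * (-p * w ^ (-p - 1)) * s1d p n w
      + w ^ (-p) * s1dd p n w)

private lemma hasDerivAt_Phi (p n a b : ℝ) {w : ℝ} (hw : 0 < w) :
    HasDerivAt (Phi p n a b) (Phid p n a b w) w := by
  have hr : HasDerivAt (fun w : ℝ => w ^ (-p)) (-p * w ^ (-p - 1)) w :=
    Real.hasDerivAt_rpow_const (Or.inl hw.ne')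
  exact ((hr.mul (hasDerivAt_s0 p n w)).const_mul a).add
    ((hr.mul (hasDerivAt_s1 p n w)).const_mul b)

private lemma hasDerivAt_Phid (p n a b : ℝ) {w : ℝ} (hw : 0 < w) :
    HasDerivAt (Phid p n a b) (Phidd p n a b w) w := by
  have hr : HasDerivAt (fun w : ℝ => w ^ (-p)) (-p * w ^ (-p - 1)) w :=
    Real.hasDerivAt_rpow_const (Or.inl hw.ne')
  have hr1 : HasDerivAt (fun w : ℝ => w ^ (-p - 1)) ((-p - 1) * w ^ (-p - 1 - 1)) w :=
    Real.hasDerivAt_rpow_const (Or.inl hw.ne')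
  have hr2 : HasDerivAt (fun w : ℝ => -p * w ^ (-p - 1)) (-p * ((-p - 1) * w ^ (-p - 1 - 1))) w :=
    hr1.const_mul (-p)
  have H : HasDerivAt (Phid p n a b)
      (a * ((-p * ((-p - 1) * w ^ (-p - 1 - 1)) * s0 p n w + (-p * w ^ (-p - 1)) * s0d p n w)
        + (-p * w ^ (-p - 1) * s0d p n w + w ^ (-p) * s0dd p n w))
      + b * ((-p * ((-p - 1) * w ^ (-p - 1 - 1)) * s1 p n w + (-p * w ^ (-p - 1)) * s1d p n w)
        + (-p * w ^ (-p - 1) * s1d p n w + w ^ (-p) * s1dd p n w))) w :=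
    (((hr2.mul (hasDerivAt_s0 p n w)).add (hr.mul (hasDerivAt_s0d p n w))).const_mul a).add
      (((hr2.mul (hasDerivAt_s1 p n w)).add (hr.mul (hasDerivAt_s1d p n w))).const_mul b)
  convert H using 1
  simp only [Phidd]
  rw [show (-p - 1 - 1 : ℝ) = -p - 2 by ring]
  ring

private lemma ode_Phi (p n a b : ℝ) (hp : ∀ k : ℕ, p ≠ (k:ℝ)) {w : ℝ} (hw : 0 < w) :
    Phidd p n a b w + n^2 * Phi p n a b w
      = w ^ (-p - 2) * ((-a*(1+p) + b*n*w) / Real.Gamma (-p)) := by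
  have hw0 : w ≠ 0 := hw.ne'
  have e1 : w ^ (-p - 1) = w ^ (-p - 2) * w := by
    rw [show (-p - 1 : ℝ) = (-p - 2) + 1 by ring, Real.rpow_add_one hw0]
  have e0 : w ^ (-p) = w ^ (-p - 2) * w * w := by
    rw [← Real.rpow_add_one hw0, ← Real.rpow_add_one hw0,
      show (-p - 2 + 1 + 1 : ℝ) = -p by ring]
  have i0 := I0 p n hp w
  have i1 := I1 p n hp w
  simp only [Phi, Phidd]
  rw [e1, e0]
  linear_combination (a * w ^ (-p - 2)) * i0 + (b * w ^ (-p - 2)) * i1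


/-- The transformation `w = v t^c` of the forced-oscillator solution solves the
transformed equation with power-law coefficients. -/
theorem transformed_forced_oscillator_exact_solution
    (p : ℝ) (hp : ∀ k : ℕ, p ≠ (k : ℝ))
    (n v c : ℝ) (hn : n ≠ 0) (hv : 0 < v) (hc : c ≠ 0) (a b : ℝ)
    (F : ℝ → ℝ)
    (hF : ∀ w : ℝ, 0 < w →
      F w = a * (∑' m : ℕ, (-1 : ℝ) ^ m * n ^ (2 * m) * w ^ (2 * (m : ℝ) - p) /
              Real.Gamma (2 * (m : ℝ) + 1 - p)) +
            b * (∑' m : ℕ, (-1 : ℝ) ^ m * n ^ (2 * m + 1) * w ^ (2 * (m : ℝ) + 1 - p) /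
              Real.Gamma (2 * (m : ℝ) + 2 - p)))
    (G : ℝ → ℝ)
    (hG : ∀ t : ℝ, 0 < t → G t = F (v * t ^ c)) :
    ∀ t : ℝ, 0 < t →
      DifferentiableAt ℝ G t ∧ DifferentiableAt ℝ (deriv G) t ∧
      deriv (deriv G) t + ((1 - c) / t) * deriv G t +
          (n * c * v) ^ 2 * t ^ (2 * c - 2) * G t =
        c ^ 2 * (-a * (1 + p) + b * n * v * t ^ c) /
          (Real.Gamma (-p) * v ^ p * t ^ (2 + c * p)) := by
  -- F agrees with Phi on positive reals
  have hFP : ∀ w : ℝ, 0 < w → F w = Phi p n a b w := by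
    intro w hw
    rw [hF w hw, Phi]
    congr 1
    · congr 1
      rw [s0, ← tsum_mul_left]
      refine tsum_congr fun m => ?_
      rw [c0, show (2 * (m:ℝ) - p) = ((2*m : ℕ):ℝ) + (-p) by push_cast; ring,
        Real.rpow_add hw, Real.rpow_natCast]
      ring
    · congr 1
      rw [s1, ← tsum_mul_left]
      refine tsum_congr fun m => ?_
      rw [c1, show (2 * (m:ℝ) + 1 - p) = ((2*m+1 : ℕ):ℝ) + (-p) by push_cast; ring,
        Real.rpow_add hw, Real.rpow_natCast]
      ring
  -- G agrees with Psi on positive reals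
  have hGP : ∀ s : ℝ, 0 < s → G s = Phi p n a b (v * s ^ c) :=
    fun s hs => by rw [hG s hs, hFP _ (mul_pos hv (Real.rpow_pos_of_pos hs c))]
  -- derivative of G everywhere on positive reals
  have hGd : ∀ s : ℝ, 0 < s →
      HasDerivAt G (Phid p n a b (v * s ^ c) * (v * (c * s ^ (c - 1)))) s := by
    intro s hs
    have hws : 0 < v * s ^ c := mul_pos hv (Real.rpow_pos_of_pos hs c)
    have hinner : HasDerivAt (fun t : ℝ => v * t ^ c) (v * (c * s ^ (c - 1))) s :=
      (Real.hasDerivAt_rpow_const (Or.inl hs.ne')).const_mul v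
    have hcomp := (hasDerivAt_Phi p n a b hws).comp s hinner
    have hΨ : HasDerivAt (fun t : ℝ => Phi p n a b (v * t ^ c))
        (Phid p n a b (v * s ^ c) * (v * (c * s ^ (c - 1)))) s := hcomp
    apply hΨ.congr_of_eventuallyEq
    filter_upwards [isOpen_Ioi.mem_nhds (Set.mem_Ioi.mpr hs)] with x hx
    exact hGP x hx
  intro t ht
  have ht0 : t ≠ 0 := ht.ne'
  have hX : 0 < t ^ c := Real.rpow_pos_of_pos ht c
  have hw : 0 < v * t ^ c := mul_pos hv hX
  have hd1 := hGd t ht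
  -- second derivative
  have hinner : HasDerivAt (fun s : ℝ => v * s ^ c) (v * (c * t ^ (c - 1))) t :=
    (Real.hasDerivAt_rpow_const (Or.inl ht0)).const_mul v
  have hsec : HasDerivAt (fun s : ℝ => v * (c * s ^ (c - 1)))
      (v * (c * ((c - 1) * t ^ (c - 1 - 1)))) t :=
    ((Real.hasDerivAt_rpow_const (Or.inl ht0)).const_mul c).const_mul v
  have hΨd : HasDerivAt (fun s : ℝ => Phid p n a b (v * s ^ c) * (v * (c * s ^ (c - 1))))
      (Phidd p n a b (v * t ^ c) * (v * (c * t ^ (c - 1))) * (v * (c * t ^ (c - 1)))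
        + Phid p n a b (v * t ^ c) * (v * (c * ((c - 1) * t ^ (c - 1 - 1))))) t := by
    have hcomp := (hasDerivAt_Phid p n a b hw).comp t hinner
    exact hcomp.mul hsec
  have hd2 : HasDerivAt (deriv G)
      (Phidd p n a b (v * t ^ c) * (v * (c * t ^ (c - 1))) * (v * (c * t ^ (c - 1)))
        + Phid p n a b (v * t ^ c) * (v * (c * ((c - 1) * t ^ (c - 1 - 1))))) t := by
    apply hΨd.congr_of_eventuallyEq
    filter_upwards [isOpen_Ioi.mem_nhds (Set.mem_Ioi.mpr ht)] with x hx
    exact ((hGd x hx).deriv).symm ▸ rfl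
  refine ⟨hd1.differentiableAt, hd2.differentiableAt, ?_⟩
  rw [hd2.deriv, hd1.deriv, hGP t ht]
  -- analytic identity
  have hΓp : Real.Gamma (-p) ≠ 0 := by
    apply Real.Gamma_ne_zero; intro k hk; exact hp k (by push_cast at hk; linarith)
  have ode := ode_Phi p n a b hp hw
  -- rpow decompositions
  have E1 : t ^ (c - 1) = t ^ c / t := by
    rw [Real.rpow_sub ht, Real.rpow_one]
  have E2 : t ^ (c - 1 - 1) = t ^ c / t ^ 2 := by
    rw [show (c - 1 - 1 : ℝ) = c - 2 by ring, Real.rpow_sub ht,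
      show (2:ℝ) = ((2:ℕ):ℝ) by norm_num, Real.rpow_natCast]
  have E3 : t ^ (2 * c - 2) = t ^ c * t ^ c / t ^ 2 := by
    rw [show (2 * c - 2 : ℝ) = c + (c - 2) by ring, Real.rpow_add ht, Real.rpow_sub ht,
      show (2:ℝ) = ((2:ℕ):ℝ) by norm_num, Real.rpow_natCast]
    ring
  have E4 : t ^ (2 + c * p) = t ^ 2 * t ^ (c * p) := by
    rw [Real.rpow_add ht, show (2:ℝ) = ((2:ℕ):ℝ) by norm_num, Real.rpow_natCast]
  have E5 : (v * t ^ c) ^ (-p - 2) = (v ^ p * t ^ (c * p) * (v * t ^ c) ^ 2)⁻¹ := by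
    rw [show (-p - 2 : ℝ) = -(p + 2) by ring, Real.rpow_neg hw.le,
      Real.rpow_add hw, Real.mul_rpow hv.le hX.le, ← Real.rpow_mul ht.le,
      show (2:ℝ) = ((2:ℕ):ℝ) by norm_num, Real.rpow_natCast]
  rw [E5] at ode
  have hPdd : Phidd p n a b (v * t ^ c)
      = (v ^ p * t ^ (c * p) * (v * t ^ c) ^ 2)⁻¹ * ((-a*(1+p) + b*n*(v * t ^ c)) / Real.Gamma (-p))
        - n ^ 2 * Phi p n a b (v * t ^ c) := by linarith [ode]
  rw [hPdd, E1, E2, E3, E4]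
  have hvp : (0:ℝ) < v ^ p := Real.rpow_pos_of_pos hv p
  have hcp : (0:ℝ) < t ^ (c * p) := Real.rpow_pos_of_pos ht (c * p)
  field_simp
  ring
end

section
/- Let p be a real number with p < 2 and let ω > 0. Define the fractional derivative of order p of sin(ωt) by the series D(t) = ∑_{m=0}^∞ (-1)^m·ω^(2m+1)·t^(2m+1-p)/Γ(2m+2-p) for t > 0. Then for every real s > ω, the Laplace transform integral ∫_0^∞ exp(-s·t)·D(t) dt converges and equals ω·s^p/(s²+ω²). -/
open Real MeasureTheory

open Set Filter in

lemma aux_int {b s : ℝ} (hb : 0 < b) (hs : 0 < s) :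
    IntegrableOn (fun t : ℝ => t ^ (b - 1) * Real.exp (-(s * t))) (Set.Ioi 0) := by
  have h0 : IntegrableOn (fun x : ℝ => Real.exp (-x) * x ^ (b - 1)) (Set.Ioi 0) :=
    Real.GammaIntegral_convergent hb
  have h1 : IntegrableOn (fun x : ℝ => Real.exp (-(s * x)) * (s * x) ^ (b - 1)) (Set.Ioi 0) := by
    rw [integrableOn_Ioi_comp_mul_left_iff
      (fun x : ℝ => Real.exp (-x) * x ^ (b - 1)) 0 hs, mul_zero]
    exact h0
  have hss : s ^ (1 - b) * s ^ (b - 1) = 1 := by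
    rw [← Real.rpow_add hs]; norm_num
  have h2 : IntegrableOn
      (fun x : ℝ => s ^ (1 - b) * (Real.exp (-(s * x)) * (s * x) ^ (b - 1))) (Set.Ioi 0) :=
    h1.const_mul _
  apply h2.congr_fun ?_ measurableSet_Ioi
  intro x hx
  dsimp only
  rw [Real.mul_rpow hs.le (le_of_lt hx)]
  linear_combination (Real.exp (-(s * x)) * x ^ (b - 1)) * hss

lemma integrable_tsum_aux {α : Type*} [MeasurableSpace α] {μ : Measure α}
    {F : ℕ → α → ℝ} (hm : ∀ m, Integrable (F m) μ)
    (hsum : Summable fun m => ∫ a, ‖F m a‖ ∂μ) :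
    Integrable (fun a => ∑' m, F m a) μ := by
  have hae_meas : ∀ m, AEMeasurable (fun a => (‖F m a‖₊ : ENNReal)) μ :=
    fun m => AEStronglyMeasurable.enorm (hm m).aestronglyMeasurable
  have h1 : ∀ m, ∫⁻ a, (‖F m a‖₊ : ENNReal) ∂μ = ENNReal.ofReal (∫ a, ‖F m a‖ ∂μ) := fun m =>
    (ofReal_integral_norm_eq_lintegral_enorm (hm m)).symm
  have hlin : ∑' m, ∫⁻ a, (‖F m a‖₊ : ENNReal) ∂μ ≠ ⊤ := by
    rw [tsum_congr h1,
      ← ENNReal.ofReal_tsum_of_nonneg (fun m => integral_nonneg fun a => norm_nonneg _) hsum]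
    exact ENNReal.ofReal_ne_top
  have hfin : ∫⁻ a, ∑' m, (‖F m a‖₊ : ENNReal) ∂μ ≠ ⊤ := by
    rw [lintegral_tsum hae_meas]; exact hlin
  have hsummae : ∀ᵐ a ∂μ, Summable fun m => ‖F m a‖ := by
    refine (ae_lt_top' (AEMeasurable.ennreal_tsum hae_meas) hfin).mono fun a ha => ?_
    have := ENNReal.tsum_coe_ne_top_iff_summable_coe.mp ha.ne
    simpa [coe_nnnorm] using this
  constructor
  · have hpart : ∀ n : ℕ, AEStronglyMeasurable (fun a => ∑ m ∈ Finset.range n, F m a) μ :=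
      fun n => Finset.aestronglyMeasurable_fun_sum _ fun m _ => (hm m).aestronglyMeasurable
    refine aestronglyMeasurable_of_tendsto_ae (Filter.atTop : Filter ℕ) hpart ?_
    filter_upwards [hsummae] with a ha
    exact ha.of_norm.hasSum.tendsto_sum_nat
  · refine lt_of_le_of_lt (lintegral_mono_ae ?_) hfin.lt_top
    filter_upwards [hsummae] with a ha
    have hnn : Summable fun m => ‖F m a‖₊ := by
      rw [← NNReal.summable_coe]; simpa [coe_nnnorm] using ha
    calc (‖∑' m, F m a‖₊ : ENNReal) ≤ ((∑' m, ‖F m a‖₊ : NNReal) : ENNReal) :=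
          ENNReal.coe_le_coe.2 (nnnorm_tsum_le hnn)
      _ = ∑' m, (‖F m a‖₊ : ENNReal) := ENNReal.coe_tsum hnn

/-- Laplace transform of the fractional derivative of order `p` of `sin(ωt)`:
`∫_0^∞ e^{-st} D(t) dt = ω s^p/(s²+ω²)` for `s > ω`. -/
theorem laplace_transform_fractional_derivative_sin
    (p : ℝ) (hp : p < 2) (ω : ℝ) (hω : 0 < ω)
    (D : ℝ → ℝ)
    (hD : ∀ t : ℝ, 0 < t →
      D t = ∑' m : ℕ, (-1 : ℝ) ^ m * ω ^ (2 * m + 1) * t ^ (2 * (m : ℝ) + 1 - p) /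
        Real.Gamma (2 * (m : ℝ) + 2 - p)) :
    ∀ s : ℝ, ω < s →
      IntegrableOn (fun t : ℝ => Real.exp (-(s * t)) * D t) (Set.Ioi 0) ∧
      ∫ t in Set.Ioi (0 : ℝ), Real.exp (-(s * t)) * D t =
        ω * s ^ p / (s ^ 2 + ω ^ 2) := by
  intro s hs
  have hs0 : 0 < s := hω.trans hs
  set F : ℕ → ℝ → ℝ := fun m t =>
    Real.exp (-(s * t)) * ((-1 : ℝ) ^ m * ω ^ (2 * m + 1) * t ^ (2 * (m : ℝ) + 1 - p) /
      Real.Gamma (2 * (m : ℝ) + 2 - p)) with hF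
  have ham : ∀ m : ℕ, 0 < 2 * (m : ℝ) + 2 - p := by
    intro m
    have : (0 : ℝ) ≤ (m : ℝ) := Nat.cast_nonneg m
    linarith
  have hGam : ∀ m : ℕ, 0 < Real.Gamma (2 * (m : ℝ) + 2 - p) :=
    fun m => Real.Gamma_pos_of_pos (ham m)
  -- integrability of each term
  have hbase : ∀ m : ℕ, IntegrableOn
      (fun t : ℝ => t ^ (2 * (m : ℝ) + 2 - p - 1) * Real.exp (-(s * t))) (Set.Ioi 0) :=
    fun m => aux_int (ham m) hs0
  have hFeq : ∀ m : ℕ, ∀ t : ℝ, F m t =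
      ((-1 : ℝ) ^ m * ω ^ (2 * m + 1) / Real.Gamma (2 * (m : ℝ) + 2 - p)) *
        (t ^ (2 * (m : ℝ) + 2 - p - 1) * Real.exp (-(s * t))) := by
    intro m t
    have : 2 * (m : ℝ) + 2 - p - 1 = 2 * (m : ℝ) + 1 - p := by ring
    rw [this, hF]
    ring
  have hF_int : ∀ m : ℕ, IntegrableOn (F m) (Set.Ioi 0) := by
    intro m
    have h2 : IntegrableOn (fun t : ℝ =>
        ((-1 : ℝ) ^ m * ω ^ (2 * m + 1) / Real.Gamma (2 * (m : ℝ) + 2 - p)) *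
          (t ^ (2 * (m : ℝ) + 2 - p - 1) * Real.exp (-(s * t)))) (Set.Ioi 0) :=
      (hbase m).const_mul _
    exact h2.congr_fun (fun t _ => (hFeq m t).symm) measurableSet_Ioi
  -- value of each integral
  have hF_val : ∀ m : ℕ, ∫ t in Set.Ioi (0 : ℝ), F m t =
      (-1 : ℝ) ^ m * ω ^ (2 * m + 1) * (1 / s) ^ (2 * (m : ℝ) + 2 - p) := by
    intro m
    rw [setIntegral_congr_fun measurableSet_Ioi (fun t _ => hFeq m t),
      MeasureTheory.integral_const_mul, Real.integral_rpow_mul_exp_neg_mul_Ioi (ham m) hs0]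
    rw [mul_comm ((1 / s) ^ (2 * (m : ℝ) + 2 - p)) (Real.Gamma (2 * (m : ℝ) + 2 - p)),
      ← mul_assoc, div_mul_cancel₀ _ (hGam m).ne']
  -- value of each norm integral
  have hF_norm : ∀ m : ℕ, ∫ t in Set.Ioi (0 : ℝ), ‖F m t‖ =
      ω ^ (2 * m + 1) * (1 / s) ^ (2 * (m : ℝ) + 2 - p) := by
    intro m
    have hptw : ∀ t ∈ Set.Ioi (0 : ℝ), ‖F m t‖ =
        (ω ^ (2 * m + 1) / Real.Gamma (2 * (m : ℝ) + 2 - p)) *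
          (t ^ (2 * (m : ℝ) + 2 - p - 1) * Real.exp (-(s * t))) := by
      intro t ht
      rw [Real.norm_eq_abs, hFeq m t, abs_mul, abs_div, abs_mul, abs_pow, abs_neg, abs_one,
        one_pow, one_mul, abs_of_nonneg (pow_nonneg hω.le _), abs_of_nonneg (hGam m).le,
        abs_of_nonneg (mul_nonneg (Real.rpow_nonneg (le_of_lt ht) _) (Real.exp_pos _).le)]
    rw [setIntegral_congr_fun measurableSet_Ioi hptw, MeasureTheory.integral_const_mul,
      Real.integral_rpow_mul_exp_neg_mul_Ioi (ham m) hs0]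
    rw [mul_comm ((1 / s) ^ (2 * (m : ℝ) + 2 - p)) (Real.Gamma (2 * (m : ℝ) + 2 - p)),
      ← mul_assoc, div_mul_cancel₀ _ (hGam m).ne']
  -- rewriting the rpow
  have hpow : ∀ m : ℕ, (1 / s) ^ (2 * (m : ℝ) + 2 - p) =
      ((1 / s) ^ 2) ^ m * (1 / s) ^ (2 - p : ℝ) := by
    intro m
    have h1s : (0 : ℝ) < 1 / s := by positivity
    have : 2 * (m : ℝ) + 2 - p = ((2 * m : ℕ) : ℝ) + (2 - p) := by push_cast; ring
    rw [this, Real.rpow_add h1s, Real.rpow_natCast, pow_mul]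
  have hr1 : ω / s < 1 := (div_lt_one hs0).2 hs
  have hr0 : 0 ≤ ω / s := by positivity
  -- summability of norm integrals
  have hnorm_eq : ∀ m : ℕ, ∫ t in Set.Ioi (0 : ℝ), ‖F m t‖ =
      (ω * (1 / s) ^ (2 - p : ℝ)) * ((ω / s) ^ 2) ^ m := by
    intro m
    rw [hF_norm m, hpow m]
    ring
  have hsumnorm : Summable fun m : ℕ => ∫ t in Set.Ioi (0 : ℝ), ‖F m t‖ := by
    simp_rw [hnorm_eq]
    exact (summable_geometric_of_lt_one (by positivity)
      (by nlinarith)).mul_left _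
  -- ae equality
  have heq : (fun t : ℝ => Real.exp (-(s * t)) * D t)
      =ᵐ[volume.restrict (Set.Ioi 0)] fun t => ∑' m, F m t := by
    filter_upwards [ae_restrict_mem measurableSet_Ioi] with t ht
    rw [hD t ht, ← tsum_mul_left]
  have hint : Integrable (fun t => ∑' m, F m t) (volume.restrict (Set.Ioi 0)) :=
    integrable_tsum_aux hF_int hsumnorm
  constructor
  · exact hint.congr heq.symm
  · rw [MeasureTheory.integral_congr_ae heq,
      ← integral_tsum_of_summable_integral_norm hF_int hsumnorm]
    -- compute the sum
    have hterm : ∀ m : ℕ, ∫ t in Set.Ioi (0 : ℝ), F m t =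
        (ω * (1 / s) ^ (2 - p : ℝ)) * (-(ω / s) ^ 2) ^ m := by
      intro m
      rw [hF_val m, hpow m]
      ring
    simp_rw [hterm]
    rw [tsum_mul_left, tsum_geometric_of_norm_lt_one (by
      rw [norm_neg, norm_pow, Real.norm_eq_abs, abs_of_nonneg hr0]
      nlinarith)]
    -- final algebra
    have h1 : (1 / s : ℝ) ^ (2 - p : ℝ) = s ^ (p - 2 : ℝ) := by
      rw [one_div, Real.inv_rpow hs0.le, ← Real.rpow_neg hs0.le, neg_sub]
    have h2 : s ^ (p - 2 : ℝ) * s ^ (2 : ℕ) = s ^ p := by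
      rw [← Real.rpow_natCast s 2, ← Real.rpow_add hs0]
      norm_num
    rw [h1, ← h2]
    have hden : s ^ 2 + ω ^ 2 ≠ 0 := by positivity
    field_simp
    ring_nf
    rw [← add_mul, mul_inv_cancel₀ hden]
end

section
/- Let p be a real number with p < 1 and let ω > 0. Define the fractional derivative of order p of cos(ωt) by the series D(t) = ∑_{m=0}^∞ (-1)^m·ω^(2m)·t^(2m-p)/Γ(2m+1-p) for t > 0. Then for every real s > ω, the Laplace transform integral ∫_0^∞ exp(-s·t)·D(t) dt converges and equals s^(p+1)/(s²+ω²). -/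
open Real MeasureTheory

/-- Laplace transform of the fractional derivative of order `p` of `cos(ωt)`:
`∫_0^∞ e^{-st} D(t) dt = s^(p+1)/(s²+ω²)` for `s > ω`. -/
theorem laplace_transform_fractional_derivative_cos
    (p : ℝ) (hp : p < 1) (ω : ℝ) (hω : 0 < ω)
    (D : ℝ → ℝ)
    (hD : ∀ t : ℝ, 0 < t →
      D t = ∑' m : ℕ, (-1 : ℝ) ^ m * ω ^ (2 * m) * t ^ (2 * (m : ℝ) - p) /
        Real.Gamma (2 * (m : ℝ) + 1 - p)) :
    ∀ s : ℝ, ω < s →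
      IntegrableOn (fun t : ℝ => Real.exp (-(s * t)) * D t) (Set.Ioi 0) ∧
      ∫ t in Set.Ioi (0 : ℝ), Real.exp (-(s * t)) * D t =
        s ^ (p + 1) / (s ^ 2 + ω ^ 2) := by
  intro s hs
  have hs0 : 0 < s := hω.trans hs
  set f : ℕ → ℝ → ℝ := fun m t =>
    ((-1:ℝ)^m * ω^(2*m) / Real.Gamma (2*(m:ℝ)+1-p)) *
      (t ^ (2*(m:ℝ)-p) * Real.exp (-(s*t))) with hf
  have ha : ∀ m : ℕ, (0:ℝ) < 2*(m:ℝ)+1-p := fun m => by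
    have : (0:ℝ) ≤ (m:ℝ) := Nat.cast_nonneg m
    linarith
  have hGpos : ∀ m : ℕ, 0 < Real.Gamma (2*(m:ℝ)+1-p) := fun m => Real.Gamma_pos_of_pos (ha m)
  -- integrability of each term
  have hInt : ∀ m, IntegrableOn (f m) (Set.Ioi 0) := by
    intro m
    have h1 : IntegrableOn (fun t:ℝ => t ^ (2*(m:ℝ)-p) * Real.exp (-s * t ^ (1:ℝ)))
        (Set.Ioi 0) := by
      refine integrableOn_rpow_mul_exp_neg_mul_rpow ?_ zero_lt_one hs0
      have : (0:ℝ) ≤ (m:ℝ) := Nat.cast_nonneg m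
      linarith
    simp only [Real.rpow_one, neg_mul] at h1
    exact h1.const_mul _
  -- value of the basic integral
  have hI : ∀ m : ℕ, ∫ t in Set.Ioi (0:ℝ), t ^ (2*(m:ℝ)-p) * Real.exp (-(s*t)) =
      (1/s) ^ (2*(m:ℝ)+1-p) * Real.Gamma (2*(m:ℝ)+1-p) := by
    intro m
    have h := Real.integral_rpow_mul_exp_neg_mul_Ioi (ha m) hs0
    rwa [show 2*(m:ℝ)+1-p-1 = 2*(m:ℝ)-p by ring] at h
  -- signed integrals of terms
  have hIf : ∀ m : ℕ, ∫ t in Set.Ioi (0:ℝ), f m t =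
      ((-1:ℝ)^m * ω^(2*m)) * (1/s) ^ (2*(m:ℝ)+1-p) := by
    intro m
    rw [hf]
    simp only []
    rw [MeasureTheory.integral_const_mul, hI m]
    have hG : Real.Gamma (2*(m:ℝ)+1-p) ≠ 0 := (hGpos m).ne'
    field_simp <;> ring
  -- norms of terms on `Ioi 0`
  have hnorm : ∀ m : ℕ, Set.EqOn (fun t => ‖f m t‖)
      (fun t => (ω^(2*m) / Real.Gamma (2*(m:ℝ)+1-p)) *
        (t ^ (2*(m:ℝ)-p) * Real.exp (-(s*t)))) (Set.Ioi 0) := by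
    intro m t ht
    have htp : (0:ℝ) < t := ht
    simp only [hf, Real.norm_eq_abs, abs_mul, abs_div, abs_pow, abs_neg, abs_one, one_pow,
      one_mul, abs_of_pos hω, abs_of_pos (hGpos m), abs_of_pos (Real.rpow_pos_of_pos htp _),
      abs_of_pos (Real.exp_pos _)]
  -- integrals of norms
  have hInorm : ∀ m : ℕ, ∫ t in Set.Ioi (0:ℝ), ‖f m t‖ =
      ω^(2*m) * (1/s) ^ (2*(m:ℝ)+1-p) := by
    intro m
    rw [MeasureTheory.setIntegral_congr_fun measurableSet_Ioi (hnorm m),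
      MeasureTheory.integral_const_mul, hI m]
    have hG : Real.Gamma (2*(m:ℝ)+1-p) ≠ 0 := (hGpos m).ne'
    field_simp <;> ring
  -- geometric ratio
  have hratio : ω^2 * (1/s)^2 < 1 := by
    have h1 : ω/s < 1 := (div_lt_one hs0).2 hs
    have h2 : 0 < ω/s := div_pos hω hs0
    have : ω^2 * (1/s)^2 = (ω/s)^2 := by field_simp
    rw [this]
    nlinarith
  have hterm : ∀ m : ℕ, ω^(2*m) * (1/s) ^ (2*(m:ℝ)+1-p) =
      (1/s)^(1-p) * (ω^2 * (1/s)^2)^m := by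
    intro m
    rw [show (2*(m:ℝ)+1-p) = ((2*m : ℕ) : ℝ) + (1-p) by push_cast; ring,
      Real.rpow_add (by positivity), Real.rpow_natCast, pow_mul, pow_mul, mul_pow]
    ring
  have hgsum : Summable (fun m : ℕ => ω^(2*m) * (1/s) ^ (2*(m:ℝ)+1-p)) := by
    refine Summable.congr ?_ (fun m => (hterm m).symm)
    exact (summable_geometric_of_lt_one (by positivity) hratio).mul_left _
  have hSumInt : Summable (fun m : ℕ => ∫ t in Set.Ioi (0:ℝ), ‖f m t‖) := by
    refine Summable.congr hgsum (fun m => (hInorm m).symm)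
  -- swap integral and sum
  have hkey : ∑' m : ℕ, ∫ t in Set.Ioi (0:ℝ), f m t =
      ∫ t in Set.Ioi (0:ℝ), ∑' m : ℕ, f m t :=
    MeasureTheory.integral_tsum_of_summable_integral_norm (fun m => hInt m) hSumInt
  set μ := volume.restrict (Set.Ioi (0:ℝ)) with hμ
  have hmeas : ∀ m : ℕ, AEStronglyMeasurable (f m) μ := fun m => (hInt m).1
  have h1m : ∀ m : ℕ, AEMeasurable (fun t => (‖f m t‖₊ : ENNReal)) μ :=
    fun m => (hmeas m).enorm
  have hlint : ∑' m : ℕ, ∫⁻ t, ‖f m t‖₊ ∂μ ≠ ⊤ := by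
    have he : ∀ m : ℕ, ∫⁻ t, ‖f m t‖₊ ∂μ = ENNReal.ofReal (∫ t, ‖f m t‖ ∂μ) :=
      fun m => (MeasureTheory.ofReal_integral_norm_eq_lintegral_enorm (hInt m)).symm
    rw [funext he, ← ENNReal.ofReal_tsum_of_nonneg
      (fun m => integral_nonneg fun t => norm_nonneg _) hSumInt]
    exact ENNReal.ofReal_ne_top
  have hsum_ae : ∀ᵐ t ∂μ, Summable fun m : ℕ => ‖f m t‖ := by
    have h2 := MeasureTheory.ae_lt_top' (AEMeasurable.ennreal_tsum h1m)
      (by rw [MeasureTheory.lintegral_tsum h1m]; exact hlint)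
    filter_upwards [h2] with t ht
    have h3 : Summable fun m : ℕ => ‖f m t‖₊ :=
      ENNReal.tsum_coe_ne_top_iff_summable.1 ht.ne
    have h4 := NNReal.summable_coe.2 h3
    simpa [coe_nnnorm] using h4
  have hFmeas : AEStronglyMeasurable (fun t => ∑' m : ℕ, f m t) μ := by
    refine aestronglyMeasurable_of_tendsto_ae Filter.atTop
      (f := fun n : ℕ => fun t => ∑ m ∈ Finset.range n, f m t) (fun n => ?_) ?_
    · exact Finset.aestronglyMeasurable_fun_sum _ (fun m _ => hmeas m)
    · filter_upwards [hsum_ae] with t ht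
      exact ht.of_norm.hasSum.tendsto_sum_nat
  have hFint : Integrable (fun t => ∑' m : ℕ, f m t) μ := by
    refine ⟨hFmeas, ?_⟩
    show ∫⁻ t, (‖∑' m : ℕ, f m t‖₊ : ENNReal) ∂μ < ⊤
    calc ∫⁻ t, (‖∑' m : ℕ, f m t‖₊ : ENNReal) ∂μ
        ≤ ∫⁻ t, ∑' m : ℕ, (‖f m t‖₊ : ENNReal) ∂μ := by
          refine lintegral_mono_ae ?_
          filter_upwards [hsum_ae] with t ht
          have h4 : Summable fun m : ℕ => ‖f m t‖₊ := by
            rw [← NNReal.summable_coe]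
            simpa [coe_nnnorm] using ht
          rw [← ENNReal.coe_tsum h4]
          exact_mod_cast nnnorm_tsum_le h4
      _ = ∑' m : ℕ, ∫⁻ t, (‖f m t‖₊ : ENNReal) ∂μ := MeasureTheory.lintegral_tsum h1m
      _ < ⊤ := hlint.lt_top
  have hEq : Set.EqOn (fun t : ℝ => Real.exp (-(s * t)) * D t)
      (fun t => ∑' m : ℕ, f m t) (Set.Ioi 0) := by
    intro t ht
    simp only
    rw [hD t ht, ← tsum_mul_left]
    exact tsum_congr fun m => by rw [hf]; ring
  constructor
  · refine hFint.congr ?_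
    refine ((ae_restrict_iff' measurableSet_Ioi).2 (Filter.Eventually.of_forall ?_))
    exact fun t ht => (hEq ht).symm
  · rw [MeasureTheory.setIntegral_congr_fun measurableSet_Ioi hEq, ← hkey]
    have hval : ∑' m : ℕ, ∫ t in Set.Ioi (0:ℝ), f m t =
        ∑' m : ℕ, (1/s)^(1-p) * (-(ω^2 * (1/s)^2))^m := by
      refine tsum_congr fun m => ?_
      rw [hIf m, show (2*(m:ℝ)+1-p) = ((2*m : ℕ) : ℝ) + (1-p) by push_cast; ring,
        Real.rpow_add (by positivity), Real.rpow_natCast, pow_mul, pow_mul,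
        show (-(ω^2 * (1/s)^2)) = (-1) * ω^2 * (1/s)^2 by ring, mul_pow, mul_pow]
      ring
    rw [hval, tsum_mul_left, tsum_geometric_of_norm_lt_one (by
      rw [Real.norm_eq_abs, abs_neg, abs_of_nonneg (by positivity)]
      exact hratio)]
    have hne : (0:ℝ) < 1 - -(ω^2 * (1/s)^2) := by nlinarith
    have hps : (1/s:ℝ)^(1-p) = s^(p-1) := by
      rw [one_div, Real.inv_rpow hs0.le, ← Real.rpow_neg hs0.le]
      congr 1
      ring
    have hpw : s ^ (p+1) = s^(p-1) * s^2 := by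
      rw [← Real.rpow_natCast s 2, ← Real.rpow_add hs0]
      congr 1
      push_cast
      ring
    rw [hps, hpw]
    have hsne : (s:ℝ) ≠ 0 := hs0.ne'
    have hd : (0:ℝ) < s^2 + ω^2 := by positivity
    field_simp <;> ring
    rw [← add_mul, mul_inv_cancel₀ hd.ne']
end
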